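/- arXiv:2603.15465 — 4 statements merged into one kernel-verified Lean document; each statement's English description precedes it below -/
import Mathlib

section
/- A query plan P for an acyclic conjunctive query has width 1 if and only if there exists a join tree T of the query that induces P. -/
/-- A binary query plan: leaves are base relations, internal nodes are joins. -/
inductive Plan (ι : Type) : Type where
  | leaf : ι → Plan ι
  | node : Plan ι → Plan ι → Plan ι

namespace Plan

variable {ι : Type} [DecidableEq ι]

/-- The set of relations joined in (the subtree rooted at) a plan node. -/
def rels : Plan ι → Finset ι
  | .leaf i => {i}
  | .node l r => l.rels ∪ r.rels

/-- All nodes (subplans) of a plan. -/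
def subplans : Plan ι → List (Plan ι)
  | .leaf i => [.leaf i]
  | .node l r => .node l r :: (l.subplans ++ r.subplans)

/-- The list of leaf relations of a plan. -/
def leaves : Plan ι → List ι
  | .leaf i => [i]
  | .node l r => l.leaves ++ r.leaves

end Plan

variable {ι A : Type} [DecidableEq ι] [DecidableEq A]

/-- The attributes occurring in a set of relations, given a schema. -/
def attrs (sch : ι → Finset A) (S : Finset ι) : Finset A := S.biUnion sch

/-- The interface `I(p)` of a plan node `p`. -/
def interface (sch : ι → Finset A) (all : Finset ι) (p : Plan ι) : Finset A :=
  attrs sch p.rels ∩ attrs sch (all \ p.rels)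

/-- The width of a plan node. -/
noncomputable def nodeWidth (sch : ι → Finset A) (all : Finset ι) (p : Plan ι) : ℕ :=
  sInf {k | ∃ S ⊆ p.rels, S.card = k ∧ interface sch all p ⊆ attrs sch S}

/-- The width of a plan: the maximum width over all of its nodes. -/
noncomputable def planWidth (sch : ι → Finset A) (all : Finset ι) (P : Plan ι) : ℕ :=
  (P.subplans.map (nodeWidth sch all)).foldr max 0

/-- The connectedness condition for a tree on the relations, with attribute sets
given by the schema: for any two vertices, the intersection of their attribute
sets is contained in every vertex on the path between them. -/
def JoinTree (G : SimpleGraph ι) (sch : ι → Finset A) : Prop :=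
  G.IsTree ∧
    ∀ (p q : ι) (W : G.Walk p q), W.IsPath → ∀ s ∈ W.support, sch p ∩ sch q ⊆ sch s

/-- `x` lies in the subtree of the tree `G` (rooted at `r`) rooted at `p`:
every path from `x` to the root passes through `p`. -/
def inSubtree (G : SimpleGraph ι) (r p x : ι) : Prop :=
  ∀ W : G.Walk x r, W.IsPath → p ∈ W.support

/-- A query plan `P` is induced by the join tree `G` rooted at `r`:
(1) for every vertex `p` of the join tree there is a plan node whose induced
query (set of relations, hence join) is exactly the subtree of `p`; and
(2) for every internal plan node with children `u` and `v`, there are relations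
`s` in `u` and `t` in `v` covering the respective interfaces with `s` and `t`
adjacent in the join tree. -/
def Induces (G : SimpleGraph ι) (r : ι) (sch : ι → Finset A) (P : Plan ι) : Prop :=
  (∀ p : ι, ∃ q ∈ P.subplans, (↑(Plan.rels q) : Set ι) = {x | inSubtree G r p x}) ∧
  (∀ u v : Plan ι, Plan.node u v ∈ P.subplans →
    ∃ s ∈ u.rels, ∃ t ∈ v.rels,
      interface sch P.rels u ⊆ sch s ∧ interface sch P.rels v ⊆ sch t ∧ G.Adj s t)

/-!
Width 1 means that every plan node `q` has a single relation covering its interface `I(q)`.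
Such guards can be chosen recursively, the guard of `u ⋈ v` being the guard of `u` or of `v`:
if no relation of `u` covers `I(u ⋈ v)`, a relation of `v` does, and then so does the guard of
`v`. Joining the guards of the two children of every join yields a tree, since each join links
the trees of its two disjoint children by a single edge; root it at the guard of the whole plan.
The path from a relation `x` to the root visits exactly the guards of the plan nodes containing
`x`, so the subtree of `p` is the largest plan node guarded by `p`. The path from `x` to `y`
visits only guards of nodes containing one of `x`, `y` but not the other; an attribute shared by
`x` and `y` lies in the interface of such a node, hence in its guard, which is the connectedness
condition. Conversely, condition (2) of an inducing join tree covers the interface of each child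
of a join by a single relation, and the interface of the root is empty.
-/

namespace SimpleGraph

variable {V : Type*} {G H K : SimpleGraph V} {S : Set V}

theorem Walk.end_mem_of_forall_adj (hS : ∀ x y, G.Adj x y → x ∈ S → y ∈ S) {a b : V}
    (W : G.Walk a b) (ha : a ∈ S) : b ∈ S := by
  induction W with
  | nil => exact ha
  | cons h _ ih => exact ih (hS _ _ h ha)

theorem Walk.edges_subset_edgeSet_of_forall_adj
    (hS : ∀ x y, G.Adj x y → x ∈ S → H.Adj x y ∧ y ∈ S) {a b : V} (W : G.Walk a b)
    (ha : a ∈ S) : ∀ e ∈ W.edges, e ∈ H.edgeSet := by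
  induction W with
  | nil => simp
  | cons h _ ih =>
    simp only [Walk.edges_cons, List.mem_cons, forall_eq_or_imp]
    exact ⟨(hS _ _ h ha).1, ih (hS _ _ h ha).2⟩

theorem IsAcyclic.sup_of_forall_adj (hH : H.IsAcyclic) (hK : K.IsAcyclic)
    (hHS : ∀ x y, H.Adj x y → x ∈ S) (hKS : ∀ x y, K.Adj x y → x ∉ S) :
    (H ⊔ K).IsAcyclic := by
  intro v c hc
  by_cases hv : v ∈ S
  · refine hH _ (hc.transfer (c.edges_subset_edgeSet_of_forall_adj (S := S) ?_ hv))
    rintro x y (h | h) hx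
    · exact ⟨h, hHS y x h.symm⟩
    · exact absurd hx (hKS x y h)
  · refine hK _ (hc.transfer (c.edges_subset_edgeSet_of_forall_adj (S := Sᶜ) ?_ hv))
    rintro x y (h | h) hx
    · exact absurd (hHS x y h) hx
    · exact ⟨h, hKS y x h.symm⟩

theorem not_reachable_sup_of_forall_adj (hHS : ∀ x y, H.Adj x y → x ∈ S)
    (hKS : ∀ x y, K.Adj x y → x ∉ S) {a b : V} (ha : a ∈ S) (hb : b ∉ S) :
    ¬(H ⊔ K).Reachable a b := by
  rintro ⟨W⟩
  refine hb (W.end_mem_of_forall_adj ?_ ha)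
  rintro x y (h | h) hx
  · exact hHS y x h.symm
  · exact absurd hx (hKS x y h)

theorem IsAcyclic.support_subset_support_of_isPath [DecidableEq V] (hG : G.IsAcyclic)
    {a b : V} {P : G.Walk a b} (hP : P.IsPath) (W : G.Walk a b) : P.support ⊆ W.support := by
  obtain rfl : P = W.bypass :=
    congrArg Subtype.val <|
      (hG.subsingleton_path a b).elim ⟨P, hP⟩ ⟨W.bypass, W.bypass_isPath⟩
  exact W.support_bypass_subset_support

theorem Walk.IsPath.exists_isPath_support_eq_insert {x a b : V} {W : G.Walk x a}
    (hW : W.IsPath) (h : b ≠ a → G.Adj a b ∧ b ∉ W.support) :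
    ∃ W' : G.Walk x b, W'.IsPath ∧ ∀ s, s ∈ W'.support ↔ s = b ∨ s ∈ W.support := by
  by_cases hba : b = a
  · subst hba
    exact ⟨W, hW, fun s => ⟨Or.inr, by rintro (rfl | hs); exacts [W.end_mem_support, hs]⟩⟩
  · obtain ⟨hadj, hb⟩ := h hba
    exact ⟨W.concat hadj, hW.concat hb hadj, by simp [Walk.support_concat, or_comm]⟩

end SimpleGraph

namespace Plan

@[simp]
theorem mem_subplans_self {ι : Type} (q : Plan ι) : q ∈ q.subplans := by
  cases q <;> simp [subplans]

@[simp]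
theorem mem_subplans_node {ι : Type} {q l r : Plan ι} :
    q ∈ (node l r).subplans ↔ q = node l r ∨ q ∈ l.subplans ∨ q ∈ r.subplans := by
  simp [subplans]

theorem mem_subplans_trans {ι : Type} {q₁ q₂ q₃ : Plan ι} (h₁₂ : q₁ ∈ q₂.subplans)
    (h₂₃ : q₂ ∈ q₃.subplans) : q₁ ∈ q₃.subplans := by
  induction q₃ with
  | leaf i =>
    simp only [subplans, List.mem_singleton] at h₂₃
    exact h₂₃ ▸ h₁₂
  | node l r ihl ihr =>
    rcases mem_subplans_node.1 h₂₃ with rfl | h | h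
    · exact h₁₂
    · exact mem_subplans_node.2 (Or.inr (Or.inl (ihl h)))
    · exact mem_subplans_node.2 (Or.inr (Or.inr (ihr h)))

theorem eq_or_exists_node_of_mem_subplans {ι : Type} {q P : Plan ι} (h : q ∈ P.subplans) :
    q = P ∨ ∃ u v, node u v ∈ P.subplans ∧ (q = u ∨ q = v) := by
  induction P with
  | leaf i => simpa [subplans] using h
  | node l r ihl ihr =>
    rcases mem_subplans_node.1 h with rfl | h | h
    · exact Or.inl rfl
    · rcases ihl h with rfl | ⟨u, v, huv, hq⟩
      · exact Or.inr ⟨q, r, mem_subplans_self _, Or.inl rfl⟩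
      · exact Or.inr ⟨u, v, mem_subplans_node.2 (Or.inr (Or.inl huv)), hq⟩
    · rcases ihr h with rfl | ⟨u, v, huv, hq⟩
      · exact Or.inr ⟨l, q, mem_subplans_self _, Or.inr rfl⟩
      · exact Or.inr ⟨u, v, mem_subplans_node.2 (Or.inr (Or.inr huv)), hq⟩

theorem rels_subset_of_mem_subplans {q P : Plan ι} (h : q ∈ P.subplans) :
    q.rels ⊆ P.rels := by
  induction P with
  | leaf i =>
    simp only [subplans, List.mem_singleton] at h
    exact h ▸ subset_rfl
  | node l r ihl ihr =>
    rcases mem_subplans_node.1 h with rfl | h | h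
    · exact subset_rfl
    · exact (ihl h).trans Finset.subset_union_left
    · exact (ihr h).trans Finset.subset_union_right

theorem rels_nonempty (q : Plan ι) : q.rels.Nonempty := by
  induction q with
  | leaf i => exact Finset.singleton_nonempty i
  | node l r ihl _ => exact ihl.mono Finset.subset_union_left

theorem rels_eq_toFinset_leaves (q : Plan ι) : q.rels = q.leaves.toFinset := by
  induction q with
  | leaf i => simp [rels, leaves]
  | node l r ihl ihr => simp [rels, leaves, ihl, ihr]

theorem nodup_leaves_node {l r : Plan ι} :
    (node l r).leaves.Nodup ↔ l.leaves.Nodup ∧ r.leaves.Nodup ∧ Disjoint l.rels r.rels := by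
  simp only [leaves, List.nodup_append', rels_eq_toFinset_leaves,
    List.disjoint_toFinset_iff_disjoint]

theorem nodup_leaves_of_mem_subplans {q P : Plan ι} (h : q ∈ P.subplans) (hn : P.leaves.Nodup) :
    q.leaves.Nodup := by
  induction P with
  | leaf i =>
    simp only [subplans, List.mem_singleton] at h
    rwa [h]
  | node l r ihl ihr =>
    obtain ⟨hnl, hnr, -⟩ := nodup_leaves_node.1 hn
    rcases mem_subplans_node.1 h with rfl | h | h
    exacts [hn, ihl h hnl, ihr h hnr]

end Plan

open Plan

@[simp]
theorem attrs_singleton {ι : Type} (sch : ι → Finset A) (s : ι) : attrs sch {s} = sch s := by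
  simp [attrs]

theorem sch_subset_attrs {ι : Type} {sch : ι → Finset A} {S : Finset ι} {x : ι}
    (h : x ∈ S) : sch x ⊆ attrs sch S :=
  Finset.subset_biUnion_of_mem sch h

section Width

variable {sch : ι → Finset A} {all : Finset ι}

theorem inter_subset_interface {q : Plan ι} {x y : ι} (hx : x ∈ q.rels)
    (hy : y ∈ all \ q.rels) : sch x ∩ sch y ⊆ interface sch all q :=
  Finset.inter_subset_inter (sch_subset_attrs hx) (sch_subset_attrs hy)

theorem attrs_inter_interface_subset {p q : Plan ι} (h : p.rels ⊆ q.rels) :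
    attrs sch p.rels ∩ interface sch all q ⊆ interface sch all p :=
  Finset.inter_subset_inter subset_rfl
    (Finset.inter_subset_right.trans (Finset.biUnion_subset_biUnion_of_subset_left _
      (Finset.sdiff_subset_sdiff subset_rfl h)))

theorem interface_self (P : Plan ι) : interface sch P.rels P = ∅ := by
  simp [interface, attrs]

theorem nodeWidth_le_one_iff {q : Plan ι} :
    nodeWidth sch all q ≤ 1 ↔ ∃ s ∈ q.rels, interface sch all q ⊆ sch s := by
  constructor
  · intro h
    have hne :
        {k | ∃ S ⊆ q.rels, S.card = k ∧ interface sch all q ⊆ attrs sch S}.Nonempty :=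
      ⟨_, q.rels, subset_rfl, rfl, Finset.inter_subset_left⟩
    obtain ⟨S, hSq, hcard, hcov⟩ := Nat.sInf_mem hne
    rcases Nat.le_one_iff_eq_zero_or_eq_one.1 (hcard.trans_le h) with h0 | h1
    · obtain ⟨s, hs⟩ := q.rels_nonempty
      rw [Finset.card_eq_zero.1 h0] at hcov
      exact ⟨s, hs, hcov.trans (by simp [attrs])⟩
    · obtain ⟨s, rfl⟩ := Finset.card_eq_one.1 h1
      exact ⟨s, Finset.singleton_subset_iff.1 hSq, by simpa using hcov⟩
  · rintro ⟨s, hs, hcov⟩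
    exact Nat.sInf_le ⟨{s}, Finset.singleton_subset_iff.2 hs, Finset.card_singleton s,
      by simpa using hcov⟩

theorem planWidth_le_iff {P : Plan ι} {n : ℕ} :
    planWidth sch all P ≤ n ↔ ∀ q ∈ P.subplans, nodeWidth sch all q ≤ n := by
  refine ⟨fun h q hq => (List.le_max_of_le' 0 (List.mem_map_of_mem hq) le_rfl).trans h,
    fun h => List.max_le_of_forall_le _ n ?_⟩
  simpa using h

end Width

namespace Plan

section Guard

variable (sch : ι → Finset A) (all : Finset ι)

def guard : Plan ι → ι
  | leaf i => i
  | node u v => if interface sch all (node u v) ⊆ attrs sch u.rels then u.guard else v.guard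

def guardGraph : Plan ι → SimpleGraph ι
  | leaf _ => ⊥
  | node u v =>
    u.guardGraph ⊔ v.guardGraph ⊔ SimpleGraph.edge (u.guard sch all) (v.guard sch all)

def guardsAbove (q : Plan ι) (x : ι) : Set ι :=
  {s | ∃ q' ∈ q.subplans, x ∈ q'.rels ∧ q'.guard sch all = s}

variable {sch all}

theorem guard_mem (q : Plan ι) : q.guard sch all ∈ q.rels := by
  induction q with
  | leaf i => exact Finset.mem_singleton_self i
  | node u v ihu ihv =>
    rw [guard]
    split
    · exact Finset.mem_union_left _ ihu
    · exact Finset.mem_union_right _ ihv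

theorem guard_node_eq_or (u v : Plan ι) :
    (node u v).guard sch all = u.guard sch all ∨ (node u v).guard sch all = v.guard sch all := by
  rw [guard]
  split
  exacts [Or.inl rfl, Or.inr rfl]

theorem guard_ne_of_disjoint {u v : Plan ι} (h : Disjoint u.rels v.rels) :
    u.guard sch all ≠ v.guard sch all := fun huv =>
  Finset.disjoint_left.1 h (guard_mem u) (huv ▸ guard_mem v)

theorem interface_subset_sch_guard {q : Plan ι}
    (hw : ∀ q' ∈ q.subplans, ∃ s ∈ q'.rels, interface sch all q' ⊆ sch s) :
    interface sch all q ⊆ sch (q.guard sch all) := by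
  induction q with
  | leaf i => simp [guard, interface, rels]
  | node u v ihu ihv =>
    have hu := ihu fun q' hq' => hw q' (by simp [hq'])
    have hv := ihv fun q' hq' => hw q' (by simp [hq'])
    rw [guard]
    split
    · rename_i hI
      exact (Finset.subset_inter hI subset_rfl).trans
        ((attrs_inter_interface_subset Finset.subset_union_left).trans hu)
    · rename_i hI
      obtain ⟨s, hs, hcov⟩ := hw _ (mem_subplans_self _)
      have hsv : s ∈ v.rels := (Finset.mem_union.1 hs).resolve_left
        fun hsu => hI (hcov.trans (sch_subset_attrs hsu))
      exact (Finset.subset_inter (hcov.trans (sch_subset_attrs hsv)) subset_rfl).trans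
        ((attrs_inter_interface_subset Finset.subset_union_right).trans hv)

theorem mem_rels_of_guardGraph_adj {q : Plan ι} {x y : ι} (h : (q.guardGraph sch all).Adj x y) :
    x ∈ q.rels := by
  induction q with
  | leaf i => exact absurd h (SimpleGraph.bot_adj x y).1
  | node u v ihu ihv =>
    simp only [guardGraph, SimpleGraph.sup_adj, SimpleGraph.edge_adj] at h
    rcases h with (h | h) | ⟨⟨rfl, -⟩ | ⟨rfl, -⟩, -⟩
    · exact Finset.mem_union_left _ (ihu h)
    · exact Finset.mem_union_right _ (ihv h)
    · exact Finset.mem_union_left _ (guard_mem u)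
    · exact Finset.mem_union_right _ (guard_mem v)

theorem guardGraph_le_left (u v : Plan ι) :
    u.guardGraph sch all ≤ (node u v).guardGraph sch all :=
  le_sup_left.trans le_sup_left

theorem guardGraph_le_right (u v : Plan ι) :
    v.guardGraph sch all ≤ (node u v).guardGraph sch all :=
  le_sup_right.trans le_sup_left

theorem guardGraph_node_adj {u v : Plan ι} (h : Disjoint u.rels v.rels) :
    ((node u v).guardGraph sch all).Adj (u.guard sch all) (v.guard sch all) := by
  simp only [guardGraph, SimpleGraph.sup_adj, SimpleGraph.edge_adj]
  exact Or.inr ⟨by simp, guard_ne_of_disjoint h⟩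

theorem guardGraph_adj_guard_node_of_ne_left {u v : Plan ι} (hd : Disjoint u.rels v.rels)
    (hne : (node u v).guard sch all ≠ u.guard sch all) :
    ((node u v).guardGraph sch all).Adj (u.guard sch all) ((node u v).guard sch all) ∧
      (node u v).guard sch all ∉ u.rels := by
  rw [(guard_node_eq_or u v).resolve_left hne]
  exact ⟨guardGraph_node_adj hd, Finset.disjoint_right.1 hd (guard_mem v)⟩

theorem guardGraph_adj_guard_node_of_ne_right {u v : Plan ι} (hd : Disjoint u.rels v.rels)
    (hne : (node u v).guard sch all ≠ v.guard sch all) :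
    ((node u v).guardGraph sch all).Adj (v.guard sch all) ((node u v).guard sch all) ∧
      (node u v).guard sch all ∉ v.rels := by
  rw [(guard_node_eq_or u v).resolve_right hne]
  exact ⟨(guardGraph_node_adj hd).symm, Finset.disjoint_left.1 hd (guard_mem u)⟩

theorem guardGraph_mono {q P : Plan ι} (h : q ∈ P.subplans) :
    q.guardGraph sch all ≤ P.guardGraph sch all := by
  induction P with
  | leaf i =>
    simp only [subplans, List.mem_singleton] at h
    rw [h]
  | node l r ihl ihr =>
    rcases mem_subplans_node.1 h with rfl | h | h
    · exact le_rfl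
    · exact (ihl h).trans (guardGraph_le_left l r)
    · exact (ihr h).trans (guardGraph_le_right l r)

theorem isAcyclic_guardGraph {q : Plan ι} (hn : q.leaves.Nodup) :
    (q.guardGraph sch all).IsAcyclic := by
  induction q with
  | leaf i => exact SimpleGraph.isAcyclic_bot
  | node u v ihu ihv =>
    obtain ⟨hnu, hnv, hd⟩ := nodup_leaves_node.1 hn
    have hu : ∀ x y, (u.guardGraph sch all).Adj x y → x ∈ (u.rels : Set ι) :=
      fun _ _ h => mem_rels_of_guardGraph_adj h
    have hv : ∀ x y, (v.guardGraph sch all).Adj x y → x ∉ (u.rels : Set ι) :=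
      fun _ _ h => Finset.disjoint_right.1 hd (mem_rels_of_guardGraph_adj h)
    exact ((ihu hnu).sup_of_forall_adj (ihv hnv) hu hv).sup_edge_of_not_reachable
      (SimpleGraph.not_reachable_sup_of_forall_adj hu hv (guard_mem u)
        (Finset.disjoint_right.1 hd (guard_mem v)))

theorem mem_guardsAbove_leaf {i x s : ι} :
    s ∈ (leaf i).guardsAbove sch all x ↔ x = i ∧ s = i := by
  simp [guardsAbove, subplans, rels, guard, eq_comm]

theorem mem_guardsAbove_node {u v : Plan ι} {x s : ι} :
    s ∈ (node u v).guardsAbove sch all x ↔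
      (x ∈ (node u v).rels ∧ (node u v).guard sch all = s) ∨
        s ∈ u.guardsAbove sch all x ∨ s ∈ v.guardsAbove sch all x := by
  simp only [guardsAbove, Set.mem_ofPred_eq, mem_subplans_node]
  grind

theorem mem_rels_of_mem_guardsAbove {q : Plan ι} {x s : ι} (h : s ∈ q.guardsAbove sch all x) :
    x ∈ q.rels ∧ s ∈ q.rels := by
  obtain ⟨q', hq', hx, rfl⟩ := h
  exact ⟨rels_subset_of_mem_subplans hq' hx, rels_subset_of_mem_subplans hq' (guard_mem q')⟩

theorem mem_guardsAbove_node_of_mem_left {u v : Plan ι} (hd : Disjoint u.rels v.rels) {x s : ι}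
    (hx : x ∈ u.rels) : s ∈ (node u v).guardsAbove sch all x ↔
      s = (node u v).guard sch all ∨ s ∈ u.guardsAbove sch all x := by
  have : s ∉ v.guardsAbove sch all x := fun h =>
    Finset.disjoint_left.1 hd hx (mem_rels_of_mem_guardsAbove h).1
  have hxuv : x ∈ (node u v).rels := Finset.mem_union_left _ hx
  rw [mem_guardsAbove_node]
  tauto

theorem mem_guardsAbove_node_of_mem_right {u v : Plan ι} (hd : Disjoint u.rels v.rels) {x s : ι}
    (hx : x ∈ v.rels) : s ∈ (node u v).guardsAbove sch all x ↔
      s = (node u v).guard sch all ∨ s ∈ v.guardsAbove sch all x := by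
  have : s ∉ u.guardsAbove sch all x := fun h =>
    Finset.disjoint_right.1 hd hx (mem_rels_of_mem_guardsAbove h).1
  have hxuv : x ∈ (node u v).rels := Finset.mem_union_right _ hx
  rw [mem_guardsAbove_node]
  tauto

variable (sch all) in
theorem exists_isPath_support_eq_guardsAbove {q : Plan ι} (hn : q.leaves.Nodup) {x : ι}
    (hx : x ∈ q.rels) : ∃ W : (q.guardGraph sch all).Walk x (q.guard sch all),
      W.IsPath ∧ ∀ s, s ∈ W.support ↔ s ∈ q.guardsAbove sch all x := by
  induction q with
  | leaf i =>
    obtain rfl : x = i := Finset.mem_singleton.1 hx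
    refine ⟨.nil, .nil, fun s => ?_⟩
    rw [mem_guardsAbove_leaf, and_iff_right rfl]
    exact List.mem_singleton
  | node u v ihu ihv =>
    obtain ⟨hnu, hnv, hd⟩ := nodup_leaves_node.1 hn
    rcases Finset.mem_union.1 hx with hxu | hxv
    · obtain ⟨W, hW, hWs⟩ := ihu hnu hxu
      obtain ⟨W', hW', hW's⟩ :=
        (hW.mapLe (guardGraph_le_left u v)).exists_isPath_support_eq_insert fun hne => by
          obtain ⟨hadj, hnot⟩ := guardGraph_adj_guard_node_of_ne_left hd hne
          refine ⟨hadj, fun h => hnot ?_⟩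
          rw [SimpleGraph.Walk.support_mapLe_eq_support, hWs] at h
          exact (mem_rels_of_mem_guardsAbove h).2
      refine ⟨W', hW', fun s => ?_⟩
      rw [hW's, SimpleGraph.Walk.support_mapLe_eq_support, hWs,
        mem_guardsAbove_node_of_mem_left hd hxu]
    · obtain ⟨W, hW, hWs⟩ := ihv hnv hxv
      obtain ⟨W', hW', hW's⟩ :=
        (hW.mapLe (guardGraph_le_right u v)).exists_isPath_support_eq_insert fun hne => by
          obtain ⟨hadj, hnot⟩ := guardGraph_adj_guard_node_of_ne_right hd hne
          refine ⟨hadj, fun h => hnot ?_⟩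
          rw [SimpleGraph.Walk.support_mapLe_eq_support, hWs] at h
          exact (mem_rels_of_mem_guardsAbove h).2
      refine ⟨W', hW', fun s => ?_⟩
      rw [hW's, SimpleGraph.Walk.support_mapLe_eq_support, hWs,
        mem_guardsAbove_node_of_mem_right hd hxv]

variable (sch all) in
theorem exists_mem_subplans_mem_rels_iff_mem_guardsAbove {q : Plan ι} (hn : q.leaves.Nodup)
    {p : ι} (hp : p ∈ q.rels) :
    ∃ m ∈ q.subplans, ∀ x, x ∈ m.rels ↔ p ∈ q.guardsAbove sch all x := by
  induction q with
  | leaf i =>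
    obtain rfl : p = i := Finset.mem_singleton.1 hp
    exact ⟨leaf p, mem_subplans_self _, fun x => by simp [mem_guardsAbove_leaf, rels]⟩
  | node u v ihu ihv =>
    obtain ⟨hnu, hnv, hd⟩ := nodup_leaves_node.1 hn
    by_cases hpg : (node u v).guard sch all = p
    · exact ⟨node u v, mem_subplans_self _, fun x =>
        ⟨fun hx => mem_guardsAbove_node.2 (Or.inl ⟨hx, hpg⟩),
          fun h => (mem_rels_of_mem_guardsAbove h).1⟩⟩
    rcases Finset.mem_union.1 hp with hpu | hpv
    · obtain ⟨m, hm, hmx⟩ := ihu hnu hpu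
      refine ⟨m, by simp [hm], fun x => ?_⟩
      have : p ∉ v.guardsAbove sch all x := fun h =>
        Finset.disjoint_left.1 hd hpu (mem_rels_of_mem_guardsAbove h).2
      rw [hmx, mem_guardsAbove_node]
      tauto
    · obtain ⟨m, hm, hmx⟩ := ihv hnv hpv
      refine ⟨m, by simp [hm], fun x => ?_⟩
      have : p ∉ u.guardsAbove sch all x := fun h =>
        Finset.disjoint_right.1 hd hpv (mem_rels_of_mem_guardsAbove h).2
      rw [hmx, mem_guardsAbove_node]
      tauto

theorem inter_subset_sch_of_mem_guardsAbove {q : Plan ι}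
    (hg : ∀ q' ∈ q.subplans, interface sch all q' ⊆ sch (q'.guard sch all)) {x y s : ι}
    (hs : s ∈ q.guardsAbove sch all x) (hy : y ∈ all \ q.rels) : sch x ∩ sch y ⊆ sch s := by
  obtain ⟨q', hq', hxq', rfl⟩ := hs
  have hy' : y ∈ all \ q'.rels :=
    Finset.sdiff_subset_sdiff subset_rfl (rels_subset_of_mem_subplans hq') hy
  exact (inter_subset_interface hxq' hy').trans (hg q' hq')

theorem exists_walk_inter_subset_sch_of_mem_left_of_mem_right {u v : Plan ι}
    (hn : (node u v).leaves.Nodup)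
    (hg : ∀ q' ∈ (node u v).subplans, interface sch all q' ⊆ sch (q'.guard sch all))
    (hall : (node u v).rels ⊆ all) {x y : ι} (hx : x ∈ u.rels) (hy : y ∈ v.rels) :
    ∃ W : ((node u v).guardGraph sch all).Walk x y,
      ∀ s ∈ W.support, sch x ∩ sch y ⊆ sch s := by
  obtain ⟨hnu, hnv, hd⟩ := nodup_leaves_node.1 hn
  obtain ⟨Wx, -, hWx⟩ := exists_isPath_support_eq_guardsAbove sch all hnu hx
  obtain ⟨Wy, -, hWy⟩ := exists_isPath_support_eq_guardsAbove sch all hnv hy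
  refine ⟨(Wx.mapLe (guardGraph_le_left u v)).append
    (.cons (guardGraph_node_adj hd) (Wy.mapLe (guardGraph_le_right u v)).reverse),
    fun s hs => ?_⟩
  simp only [SimpleGraph.Walk.support_append, SimpleGraph.Walk.support_cons, List.tail_cons,
    SimpleGraph.Walk.support_reverse, SimpleGraph.Walk.support_mapLe_eq_support,
    List.mem_append, List.mem_reverse, hWx, hWy] at hs
  rcases hs with hs | hs
  · exact inter_subset_sch_of_mem_guardsAbove (fun q' hq' => hg q' (by simp [hq'])) hs
      (Finset.mem_sdiff.2 ⟨hall (by simp [rels, hy]), Finset.disjoint_right.1 hd hy⟩)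
  · rw [Finset.inter_comm]
    exact inter_subset_sch_of_mem_guardsAbove (fun q' hq' => hg q' (by simp [hq'])) hs
      (Finset.mem_sdiff.2 ⟨hall (by simp [rels, hx]), Finset.disjoint_left.1 hd hx⟩)

theorem exists_walk_inter_subset_sch {q : Plan ι} (hn : q.leaves.Nodup)
    (hg : ∀ q' ∈ q.subplans, interface sch all q' ⊆ sch (q'.guard sch all))
    (hall : q.rels ⊆ all) {x y : ι} (hx : x ∈ q.rels) (hy : y ∈ q.rels) :
    ∃ W : (q.guardGraph sch all).Walk x y, ∀ s ∈ W.support, sch x ∩ sch y ⊆ sch s := by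
  induction q generalizing x y with
  | leaf i =>
    obtain rfl : x = i := Finset.mem_singleton.1 hx
    obtain rfl : y = x := Finset.mem_singleton.1 hy
    exact ⟨.nil, by simp⟩
  | node u v ihu ihv =>
    obtain ⟨hnu, hnv, -⟩ := nodup_leaves_node.1 hn
    have hgu : ∀ q' ∈ u.subplans, interface sch all q' ⊆ sch (q'.guard sch all) :=
      fun q' hq' => hg q' (by simp [hq'])
    have hgv : ∀ q' ∈ v.subplans, interface sch all q' ⊆ sch (q'.guard sch all) :=
      fun q' hq' => hg q' (by simp [hq'])
    have hallu : u.rels ⊆ all := Finset.subset_union_left.trans hall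
    have hallv : v.rels ⊆ all := Finset.subset_union_right.trans hall
    rcases Finset.mem_union.1 hx with hxu | hxv <;> rcases Finset.mem_union.1 hy with hyu | hyv
    · obtain ⟨W, hW⟩ := ihu hnu hgu hallu hxu hyu
      exact ⟨W.mapLe (guardGraph_le_left u v), by simpa using hW⟩
    · exact exists_walk_inter_subset_sch_of_mem_left_of_mem_right hn hg hall hxu hyv
    · obtain ⟨W, hW⟩ :=
        exists_walk_inter_subset_sch_of_mem_left_of_mem_right hn hg hall hyu hxv
      exact ⟨W.reverse, by simpa [Finset.inter_comm] using hW⟩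
    · obtain ⟨W, hW⟩ := ihv hnv hgv hallv hxv hyv
      exact ⟨W.mapLe (guardGraph_le_right u v), by simpa using hW⟩

theorem inSubtree_guardGraph_iff {P : Plan ι} (hn : P.leaves.Nodup) {p x : ι}
    (hx : x ∈ P.rels) :
    inSubtree (P.guardGraph sch all) (P.guard sch all) p x ↔ p ∈ P.guardsAbove sch all x := by
  obtain ⟨W, hW, hWs⟩ := exists_isPath_support_eq_guardsAbove sch all hn hx
  refine ⟨fun h => (hWs p).1 (h W hW), fun h W' _ => ?_⟩
  exact (isAcyclic_guardGraph hn).support_subset_support_of_isPath hW W' ((hWs p).2 h)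

theorem joinTree_guardGraph {P : Plan ι} (hn : P.leaves.Nodup)
    (hg : ∀ q ∈ P.subplans, interface sch P.rels q ⊆ sch (q.guard sch P.rels))
    (hP : ∀ x, x ∈ P.rels) : JoinTree (P.guardGraph sch P.rels) sch := by
  have hwalk (x y : ι) := exists_walk_inter_subset_sch hn hg subset_rfl (hP x) (hP y)
  refine ⟨⟨(SimpleGraph.connected_iff _).2 ⟨fun x y => ?_, ⟨P.guard sch P.rels⟩⟩,
    isAcyclic_guardGraph hn⟩, fun p q W hW s hs => ?_⟩
  · obtain ⟨W, -⟩ := hwalk x y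
    exact ⟨W⟩
  · obtain ⟨W', hW'⟩ := hwalk p q
    exact hW' s ((isAcyclic_guardGraph hn).support_subset_support_of_isPath hW W' hs)

theorem induces_guardGraph {P : Plan ι} (hn : P.leaves.Nodup)
    (hg : ∀ q ∈ P.subplans, interface sch P.rels q ⊆ sch (q.guard sch P.rels))
    (hP : ∀ x, x ∈ P.rels) : Induces (P.guardGraph sch P.rels) (P.guard sch P.rels) sch P := by
  refine ⟨fun p => ?_, fun u v huv => ?_⟩
  · obtain ⟨m, hm, hmx⟩ :=
      exists_mem_subplans_mem_rels_iff_mem_guardsAbove sch P.rels hn (hP p)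
    refine ⟨m, hm, Set.ext fun x => ?_⟩
    rw [Finset.mem_coe, hmx, Set.mem_ofPred_eq, inSubtree_guardGraph_iff hn (hP x)]
  · have hd := (nodup_leaves_node.1 (nodup_leaves_of_mem_subplans huv hn)).2.2
    exact ⟨u.guard sch P.rels, guard_mem u, v.guard sch P.rels, guard_mem v,
      hg u (mem_subplans_trans (by simp) huv), hg v (mem_subplans_trans (by simp) huv),
      guardGraph_mono huv (guardGraph_node_adj hd)⟩

end Guard

end Plan

theorem planWidth_le_one_of_induces {sch : ι → Finset A} {G : SimpleGraph ι} {r : ι}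
    {P : Plan ι} (h : Induces G r sch P) : planWidth sch P.rels P ≤ 1 := by
  refine planWidth_le_iff.2 fun q hq => nodeWidth_le_one_iff.2 ?_
  rcases eq_or_exists_node_of_mem_subplans hq with rfl | ⟨u, v, huv, rfl | rfl⟩
  · obtain ⟨s, hs⟩ := q.rels_nonempty
    exact ⟨s, hs, by simp [interface_self]⟩
  · obtain ⟨s, hs, -, -, hu, -⟩ := h.2 _ v huv
    exact ⟨s, hs, hu⟩
  · obtain ⟨-, -, t, ht, -, hv, -⟩ := h.2 u _ huv
    exact ⟨t, ht, hv⟩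

theorem stmt_4_general [Fintype ι] (sch : ι → Finset A) (P : Plan ι)
    (hnodup : P.leaves.Nodup) (hall : P.rels = Finset.univ) :
    planWidth sch P.rels P ≤ 1 ↔
      ∃ (G : SimpleGraph ι) (r : ι), JoinTree G sch ∧ Induces G r sch P := by
  refine ⟨fun hw => ?_, fun ⟨G, r, _, hind⟩ => planWidth_le_one_of_induces hind⟩
  have hg : ∀ q ∈ P.subplans, interface sch P.rels q ⊆ sch (q.guard sch P.rels) :=
    fun q hq => interface_subset_sch_guard fun q' hq' =>
      nodeWidth_le_one_iff.1 (planWidth_le_iff.1 hw q' (mem_subplans_trans hq' hq))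
  have hP : ∀ x, x ∈ P.rels := by simp [hall]
  exact ⟨_, _, joinTree_guardGraph hnodup hg hP, induces_guardGraph hnodup hg hP⟩

/-- A query plan `P` for an acyclic conjunctive query has width 1 if and only if
there exists a join tree `T` of the query that induces `P`. -/
theorem stmt_4 [Fintype ι] (sch : ι → Finset A) (P : Plan ι)
    (hnodup : P.leaves.Nodup) (hall : P.rels = Finset.univ)
    (hacyclic : ∃ G : SimpleGraph ι, JoinTree G sch) :
    planWidth sch P.rels P ≤ 1 ↔
      ∃ (G : SimpleGraph ι) (r : ι), JoinTree G sch ∧ Induces G r sch P :=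
  stmt_4_general sch P hnodup hall
end

section
/- Let H be an acyclic hypergraph. If S = {e_1, ..., e_n} (n ≥ 2) is a set of distinct ears of H such that o(e_1, H) = ... = o(e_n, H) = o, then the hypergraph H' with hyperedge set (E(H) \ S) ∪ {o} (and vertex set the union of its hyperedges) is acyclic. -/
variable {A : Type*} [DecidableEq A]

/-- The overlap `o(e, H)` of a hyperedge `e` with the remaining hyperedges of
the hypergraph with hyperedge set `E`. -/
def overlap (E : Finset (Finset A)) (e : Finset A) : Finset A :=
  e ∩ (E.erase e).sup id

/-- A hyperedge `e` of `E` is an ear if some other hyperedge contains its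
overlap with the remaining hyperedges, or if it is the only hyperedge. -/
def IsEar (E : Finset (Finset A)) (e : Finset A) : Prop :=
  e ∈ E ∧ ((∃ e' ∈ E, e' ≠ e ∧ overlap E e ⊆ e') ∨ E = {e})

/-- A hypergraph (given by its hyperedge set) is acyclic if it admits a join
tree. -/
def HGAcyclic (E : Finset (Finset A)) : Prop :=
  ∃ G : SimpleGraph {f // f ∈ E}, G.IsTree ∧
    ∀ (p q : {f // f ∈ E}) (W : G.Walk p q), W.IsPath →
      ∀ s ∈ W.support, (p : Finset A) ∩ (q : Finset A) ⊆ (s : Finset A)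

/-!
Let `T` be a join tree of `E`. Relabelling every `e ∈ S` by `o` keeps `T` a join tree, because
`o ⊆ e` contains the intersection of `e` with every other hyperedge. It remains to merge the nodes
now labelled `o`: contract them to a single node and join it to one node of each component of the
remaining forest, chosen to have a `T`-neighbour labelled `o`. A path through the new node connects
two different components, so the `T`-path between its ends passes through a node labelled `o`;
this yields the running intersection property.
-/

open SimpleGraph

theorem SimpleGraph.Walk.exists_map_eq_of_forall_mem_range {V W : Type*} {H : SimpleGraph V}
    {G : SimpleGraph W} (f : H ↪g G) {u v : W} (p : G.Walk u v)
    (hp : ∀ w ∈ p.support, w ∈ Set.range f) {a b : V} (ha : f a = u) (hb : f b = v) :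
    ∃ q : H.Walk a b, q.map f.toHom = p.copy ha.symm hb.symm := by
  induction p generalizing a with
  | nil =>
    subst ha
    obtain rfl := f.injective hb
    exact ⟨.nil, rfl⟩
  | cons h p ih =>
    obtain ⟨c, hc⟩ := hp _ (p.support.mem_cons_of_mem _ p.start_mem_support)
    obtain ⟨q, hq⟩ := ih (fun w hw => hp w (List.mem_cons_of_mem _ hw)) hc hb
    subst ha hc hb
    refine ⟨.cons (f.map_adj_iff.1 h) q, ?_⟩
    simpa using hq

section JoinTree

variable {α ι κ : Type*} [DecidableEq α]

/-- A join tree of the family of hyperedges `L`, in which a hyperedge may occur several times. -/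
def IsJoinTree (T : SimpleGraph ι) (L : ι → Finset α) : Prop :=
  T.IsTree ∧ ∀ (p q : ι) (W : T.Walk p q), W.IsPath → ∀ s ∈ W.support, L p ∩ L q ⊆ L s

theorem IsJoinTree.of_subset_of_inter_subset {T : SimpleGraph ι} {L L' : ι → Finset α}
    (hT : IsJoinTree T L) (hsub : ∀ i, L' i ⊆ L i) (hinter : ∀ i j, i ≠ j → L i ∩ L j ⊆ L' i) :
    IsJoinTree T L' := by
  refine ⟨hT.1, fun p q W hW s hs => ?_⟩
  obtain rfl | hsp := eq_or_ne s p
  · exact Finset.inter_subset_left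
  calc L' p ∩ L' q ⊆ L s ∩ L p :=
        Finset.subset_inter
          ((Finset.inter_subset_inter (hsub p) (hsub q)).trans (hT.2 p q W hW s hs))
          (Finset.inter_subset_left.trans (hsub p))
    _ ⊆ L' s := hinter s p hsp

theorem IsJoinTree.comap_equiv {T : SimpleGraph ι} {L : ι → Finset α} (hT : IsJoinTree T L)
    (e : κ ≃ ι) : IsJoinTree (T.comap e) (L ∘ e) := by
  let φ := Iso.comap e T
  refine ⟨φ.isTree_iff.2 hT.1, fun p q W hW s hs => ?_⟩
  refine hT.2 _ _ (W.map φ.toHom) ((Walk.isPath_map_iff_of_injective φ.injective).2 hW) _ ?_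
  rw [Walk.support_map]
  exact List.mem_map_of_mem hs

theorem hgAcyclic_of_isJoinTree {T : SimpleGraph ι} {L : ι → Finset α} (hT : IsJoinTree T L)
    (hL : L.Injective) {E : Finset (Finset α)} (hE : ∀ f, f ∈ E ↔ ∃ i, L i = f) : HGAcyclic E := by
  let e : ι ≃ {f // f ∈ E} := Equiv.ofBijective (fun i => ⟨L i, (hE _).2 ⟨i, rfl⟩⟩)
    ⟨fun i j h => hL (congrArg Subtype.val h),
      fun f => ((hE f).1 f.2).imp fun i hi => Subtype.ext hi⟩
  have he : L ∘ e.symm = Subtype.val := funext fun f => congrArg Subtype.val (e.apply_symm_apply f)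
  exact ⟨_, he ▸ hT.comap_equiv e.symm⟩

end JoinTree

section Collapse

variable {ι : Type*} {T : SimpleGraph ι} {K : Set ι}

theorem SimpleGraph.Walk.exists_reachable_adj_notMem {u v : ι} (p : T.Walk u v) (hu : u ∈ K)
    (hv : v ∉ K) : ∃ b : K, (T.induce K).Reachable ⟨u, hu⟩ b ∧ ∃ w ∉ K, T.Adj b w := by
  induction p with
  | nil => exact absurd hu hv
  | @cons u u' v h p ih =>
    by_cases hu' : u' ∈ K
    · obtain ⟨b, hb, hbw⟩ := ih hu' hv
      exact ⟨b, (Adj.reachable (induce_adj.2 h : (T.induce K).Adj ⟨u, hu⟩ ⟨u', hu'⟩)).trans hb, hbw⟩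
    · exact ⟨⟨u, hu⟩, .rfl, u', hu', h⟩

variable (T K) in
def IsAttachment (att : (T.induce K).ConnectedComponent → K) : Prop :=
  ∀ c, (T.induce K).connectedComponentMk (att c) = c ∧ ∃ w ∉ K, T.Adj (att c) w

theorem exists_isAttachment (hT : T.Connected) (hK : ∃ i, i ∉ K) : ∃ att, IsAttachment T K att := by
  obtain ⟨i, hi⟩ := hK
  have : ∀ c : (T.induce K).ConnectedComponent,
      ∃ b : K, (T.induce K).connectedComponentMk b = c ∧ ∃ w ∉ K, T.Adj b w := by
    refine ConnectedComponent.ind fun a => ?_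
    obtain ⟨b, hab, hb⟩ := (hT.preconnected a i).some.exists_reachable_adj_notMem a.2 hi
    exact ⟨b, ConnectedComponent.sound hab.symm, hb⟩
  choose att hatt using this
  exact ⟨att, hatt⟩

variable (T K) in
/-- Contract the complement of `K` to the single vertex `none` and join `none` to the chosen
attachment vertex of each connected component of `T[K]`. -/
def collapseCompl (att : (T.induce K).ConnectedComponent → K) : SimpleGraph (Option K) where
  Adj
    | some a, some b => T.Adj a b
    | none, some a | some a, none => att ((T.induce K).connectedComponentMk a) = a
    | none, none => False
  symm := ⟨by rintro (_ | a) (_ | b) h <;> first | exact h | exact h.symm⟩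
  loopless := ⟨by rintro (_ | a) h <;> first | exact h | exact T.loopless.irrefl _ h⟩

variable {att : (T.induce K).ConnectedComponent → K}

namespace collapseCompl

def someEmbedding : T.induce K ↪g collapseCompl T K att where
  toFun := some
  inj' := Option.some_injective _
  map_rel_iff' := Iff.rfl

theorem exists_map_eq {a b : K} (W : (collapseCompl T K att).Walk (some a) (some b))
    (hW : none ∉ W.support) : ∃ R : (T.induce K).Walk a b, R.map someEmbedding.toHom = W :=
  W.exists_map_eq_of_forall_mem_range someEmbedding
    (fun _ hw => Option.ne_none_iff_exists.1 (ne_of_mem_of_not_mem hw hW)) rfl rfl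

theorem exists_isPath_of_none_notMem {a b : K} {W : (collapseCompl T K att).Walk (some a) (some b)}
    (hW : W.IsPath) (hnone : none ∉ W.support) :
    ∃ P : T.Walk a b, P.IsPath ∧ (∀ t ∈ P.support, t ∈ K) ∧
      ∀ c : K, some c ∈ W.support → (c : ι) ∈ P.support := by
  obtain ⟨R, rfl⟩ := exists_map_eq W hnone
  have hR : R.IsPath := (Walk.isPath_map_iff_of_injective (Option.some_injective _)).1 hW
  have hsome : ∀ v, v ∈ (R.map (someEmbedding (att := att)).toHom).support ↔
      ∃ c ∈ R.support, some c = v := fun v => by rw [Walk.support_map, List.mem_map]; rfl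
  have hval : ∀ t, t ∈ (R.map (Embedding.induce K).toHom).support ↔ ∃ c ∈ R.support, ↑c = t :=
    fun t => by rw [Walk.support_map, List.mem_map]; rfl
  refine ⟨R.map (Embedding.induce K).toHom,
    (Walk.isPath_map_iff_of_injective Subtype.val_injective).2 hR, fun t ht => ?_, fun c hc => ?_⟩
  · obtain ⟨c, -, rfl⟩ := (hval t).1 ht
    exact c.2
  · obtain ⟨c', hc', hcc'⟩ := (hsome _).1 hc
    exact (hval _).2 ⟨c', hc', by rw [Option.some_injective _ hcc']⟩

theorem reachable_none (hatt : IsAttachment T K att) (v : Option K) :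
    (collapseCompl T K att).Reachable v none := by
  obtain _ | a := v
  · rfl
  obtain ⟨hc, -⟩ := hatt ((T.induce K).connectedComponentMk a)
  have hadj :
      (collapseCompl T K att).Adj (some (att ((T.induce K).connectedComponentMk a))) none := by
    change att _ = _
    rw [hc]
  exact ((ConnectedComponent.exact hc.symm).map someEmbedding.toHom).trans hadj.reachable

theorem connected (hatt : IsAttachment T K att) : (collapseCompl T K att).Connected :=
  (connected_iff _).2
    ⟨fun u v => (reachable_none hatt u).trans (reachable_none hatt v).symm, ⟨none⟩⟩

theorem eq_of_adj_none {a b : K} (ha : (collapseCompl T K att).Adj none (some a))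
    (hb : (collapseCompl T K att).Adj none (some b)) (hab : (T.induce K).Reachable a b) :
    a = b := by
  change att _ = a at ha
  change att _ = b at hb
  rw [← ha, ← hb, ConnectedComponent.sound hab]

theorem not_isCycle_of_start_none (c : (collapseCompl T K att).Walk none none) : ¬ c.IsCycle := by
  -- the cycle leaves and re-enters `none` through attachment vertices of one component, which
  -- are equal, so it uses the same edge twice
  intro hc
  cases c with
  | nil => exact Walk.not_isCycle_nil hc
  | @cons _ u _ h p =>
    obtain _ | a := u
    · exact h.elim
    rw [Walk.cons_isCycle_iff] at hc
    obtain ⟨u', h', q, hpq⟩ := Walk.exists_eq_cons_of_ne (Option.some_ne_none a).symm p.reverse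
    obtain _ | b := u'
    · exact h'.elim
    have hq : none ∉ q.support := by
      have := hc.1.reverse
      rw [hpq, Walk.cons_isPath_iff] at this
      exact this.2
    obtain ⟨R, -⟩ := exists_map_eq q hq
    obtain rfl := eq_of_adj_none h' h ⟨R⟩
    apply hc.2
    rw [← List.mem_reverse, ← Walk.edges_reverse, hpq, Walk.edges_cons]
    exact List.mem_cons_self

theorem isAcyclic (hT : T.IsAcyclic) : (collapseCompl T K att).IsAcyclic := by
  classical
  intro v c hc
  by_cases hnone : none ∈ c.support
  · exact not_isCycle_of_start_none _ (hc.rotate hnone)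
  obtain ⟨a, rfl⟩ := Option.ne_none_iff_exists'.1 (ne_of_mem_of_not_mem c.start_mem_support hnone)
  obtain ⟨R, rfl⟩ := exists_map_eq c hnone
  exact hT.induce K R ((Walk.isCycle_map_iff_of_injective (Option.some_injective _)).1 hc)

theorem isTree (hT : T.IsTree) (hatt : IsAttachment T K att) : (collapseCompl T K att).IsTree :=
  ⟨connected hatt, isAcyclic hT.isAcyclic⟩

end collapseCompl

end Collapse

section CollapseJoinTree

variable {α ι : Type*} [DecidableEq α] {T : SimpleGraph ι} {K : Set ι}
  {att : (T.induce K).ConnectedComponent → K} {L : ι → Finset α} {x : Finset α}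

def collapseLabel (L : ι → Finset α) (x : Finset α) (v : Option K) : Finset α :=
  v.elim x fun a => L a

namespace collapseCompl

theorem inter_subset_of_none_notMem (hT : IsJoinTree T L) {p q : Option K}
    {W : (collapseCompl T K att).Walk p q} (hW : W.IsPath) (hnone : none ∉ W.support)
    {s : Option K} (hs : s ∈ W.support) :
    collapseLabel L x p ∩ collapseLabel L x q ⊆ collapseLabel L x s := by
  obtain ⟨a, rfl⟩ := Option.ne_none_iff_exists'.1 (ne_of_mem_of_not_mem W.start_mem_support hnone)
  obtain ⟨b, rfl⟩ := Option.ne_none_iff_exists'.1 (ne_of_mem_of_not_mem W.end_mem_support hnone)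
  obtain ⟨c, rfl⟩ := Option.ne_none_iff_exists'.1 (ne_of_mem_of_not_mem hs hnone)
  obtain ⟨P, hP, -, hcP⟩ := exists_isPath_of_none_notMem hW hnone
  exact hT.2 _ _ P hP _ (hcP c hs)

theorem inter_subset_of_start_none (hT : IsJoinTree T L) (hatt : IsAttachment T K att)
    (hK : ∀ i ∉ K, L i = x) {q : Option K} {W : (collapseCompl T K att).Walk none q}
    (hW : W.IsPath) {s : Option K} (hs : s ∈ W.support) :
    x ∩ collapseLabel L x q ⊆ collapseLabel L x s := by
  cases W with
  | nil =>
    rw [Walk.support_nil, List.mem_singleton] at hs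
    subst hs
    exact Finset.inter_subset_left
  | @cons _ u _ h W' =>
    obtain _ | a := u
    · exact h.elim
    rw [Walk.cons_isPath_iff] at hW
    rw [Walk.support_cons, List.mem_cons] at hs
    obtain rfl | hs := hs
    · exact Finset.inter_subset_left
    obtain ⟨b, rfl⟩ := Option.ne_none_iff_exists'.1 (ne_of_mem_of_not_mem W'.end_mem_support hW.2)
    obtain ⟨c, rfl⟩ := Option.ne_none_iff_exists'.1 (ne_of_mem_of_not_mem hs hW.2)
    obtain ⟨P, hP, hPK, hcP⟩ := exists_isPath_of_none_notMem hW.1 hW.2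
    obtain ⟨-, w, hwK, haw⟩ := hatt ((T.induce K).connectedComponentMk a)
    change att _ = a at h
    rw [h] at haw
    have hwP : (Walk.cons haw.symm P).IsPath := hP.cons fun hw => hwK (hPK w hw)
    have := hT.2 _ _ _ hwP c (List.mem_cons_of_mem _ (hcP c hs))
    rwa [hK w hwK] at this

theorem inter_subset_of_none_mem (hT : IsJoinTree T L)
    (hK : ∀ i ∉ K, L i = x) {p q : Option K} {W : (collapseCompl T K att).Walk p q}
    (hW : W.IsPath) (hnone : none ∈ W.support) :
    collapseLabel L x p ∩ collapseLabel L x q ⊆ x := by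
  classical
  obtain _ | a := p
  · exact Finset.inter_subset_left
  obtain _ | b := q
  · exact Finset.inter_subset_right
  by_cases hab : (T.induce K).Reachable a b
  -- a path of `T[K]` from `a` to `b` would give a second path from `some a` to `some b`
  · obtain ⟨R, hR⟩ := hab.some.toPath
    have hRW := congrArg Subtype.val <| ((isAcyclic hT.1.isAcyclic).subsingleton_path _ _).elim
      ⟨W, hW⟩ ⟨R.map someEmbedding.toHom,
        (Walk.isPath_map_iff_of_injective (Option.some_injective _)).2 hR⟩
    subst hRW
    simp [Walk.support_map, someEmbedding] at hnone
  obtain ⟨P, hP⟩ := (hT.1.connected.preconnected a b).some.toPath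
  obtain ⟨w, hwP, hwK⟩ : ∃ w ∈ P.support, w ∉ K := by
    by_contra! hPK
    exact hab ⟨P.induce K hPK⟩
  rw [← hK w hwK]
  exact hT.2 _ _ P hP w hwP

theorem isJoinTree (hT : IsJoinTree T L) (hatt : IsAttachment T K att) (hK : ∀ i ∉ K, L i = x) :
    IsJoinTree (collapseCompl T K att) (collapseLabel L x) := by
  classical
  refine ⟨isTree hT.1 hatt, fun p q W hW s hs => ?_⟩
  by_cases hnone : none ∈ W.support
  · have hpq := inter_subset_of_none_mem hT hK hW hnone
    rw [← W.take_spec hnone, Walk.mem_support_append_iff] at hs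
    rcases hs with hs | hs
    · have := inter_subset_of_start_none hT hatt hK (hW.takeUntil hnone).reverse
        (by rwa [Walk.support_reverse, List.mem_reverse])
      exact (Finset.subset_inter hpq Finset.inter_subset_left).trans this
    · have := inter_subset_of_start_none hT hatt hK (hW.dropUntil hnone) hs
      exact (Finset.subset_inter hpq Finset.inter_subset_right).trans this
  · exact inter_subset_of_none_notMem hT hW hnone hs

end collapseCompl

end CollapseJoinTree

theorem overlap_subset (E : Finset (Finset A)) (e : Finset A) : overlap E e ⊆ e :=
  Finset.inter_subset_left

theorem inter_subset_overlap {E : Finset (Finset A)} {e f : Finset A} (hf : f ∈ E) (hfe : f ≠ e) :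
    e ∩ f ⊆ overlap E e :=
  Finset.inter_subset_inter_left (Finset.le_sup (f := id) (Finset.mem_erase.2 ⟨hfe, hf⟩))

section Shrink

def shrinkLabel {E : Finset (Finset A)} (S : Finset (Finset A)) (o : Finset A)
    (e : {f // f ∈ E}) : Finset A :=
  if e.1 ∈ S then o else e.1

def keptEdges (E S : Finset (Finset A)) (o : Finset A) : Set {f // f ∈ E} :=
  {e | e.1 ∉ S ∧ e.1 ≠ o}

theorem isJoinTree_shrinkLabel {E S : Finset (Finset A)} {o : Finset A}
    {T : SimpleGraph {f // f ∈ E}} (hT : IsJoinTree T Subtype.val)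
    (hov : ∀ e ∈ S, overlap E e = o) : IsJoinTree T (shrinkLabel S o) := by
  refine hT.of_subset_of_inter_subset (fun e => ?_) fun e f hef => ?_
  all_goals (unfold shrinkLabel; split_ifs with he)
  · exact hov e he ▸ overlap_subset E e
  · exact subset_rfl
  · exact hov e he ▸ inter_subset_overlap f.2 (Subtype.coe_ne_coe.2 hef.symm)
  · exact Finset.inter_subset_left

variable {E S : Finset (Finset A)} {o : Finset A}

theorem shrinkLabel_of_notMem_keptEdges (e : {f // f ∈ E}) (he : e ∉ keptEdges E S o) :
    shrinkLabel S o e = o := by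
  by_cases heS : e.1 ∈ S
  · simp [shrinkLabel, heS]
  · simpa [shrinkLabel, heS, keptEdges] using he

theorem collapseLabel_shrinkLabel_some (a : keptEdges E S o) :
    collapseLabel (shrinkLabel S o) o (some a) = a.1.1 :=
  if_neg a.2.1

theorem collapseLabel_shrinkLabel_injective :
    (collapseLabel (K := keptEdges E S o) (shrinkLabel S o) o).Injective := by
  rintro (_ | a) (_ | b) h
  · rfl
  · exact absurd (h.trans (collapseLabel_shrinkLabel_some b)).symm b.2.2
  · exact absurd ((collapseLabel_shrinkLabel_some a).symm.trans h) a.2.2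
  · rw [collapseLabel_shrinkLabel_some, collapseLabel_shrinkLabel_some] at h
    exact congrArg some (Subtype.ext (Subtype.ext h))

theorem mem_sdiff_union_iff_exists_collapseLabel (f : Finset A) :
    f ∈ (E \ S) ∪ {o} ↔
      ∃ v : Option (keptEdges E S o), collapseLabel (shrinkLabel S o) o v = f := by
  simp only [Finset.mem_union, Finset.mem_sdiff, Finset.mem_singleton]
  constructor
  · rintro (⟨hfE, hfS⟩ | rfl)
    · by_cases hfo : f = o
      · exact ⟨none, hfo.symm⟩
      · exact ⟨some ⟨⟨f, hfE⟩, hfS, hfo⟩, collapseLabel_shrinkLabel_some _⟩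
    · exact ⟨none, rfl⟩
  · rintro ⟨_ | a, rfl⟩
    · exact Or.inr rfl
    · exact Or.inl (collapseLabel_shrinkLabel_some a ▸ ⟨a.1.2, a.2.1⟩)

end Shrink

theorem stmt_7_general (E : Finset (Finset A)) (hE : HGAcyclic E)
    (S : Finset (Finset A)) (hS : S ⊆ E) (hcard : 2 ≤ S.card)
    (o : Finset A) (hov : ∀ e ∈ S, overlap E e = o) :
    HGAcyclic ((E \ S) ∪ {o}) := by
  obtain ⟨T, hT⟩ := hE
  obtain ⟨s₀, hs₀⟩ : S.Nonempty := Finset.card_pos.1 (by omega)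
  obtain ⟨att, hatt⟩ := exists_isAttachment (K := keptEdges E S o) hT.1.connected
    ⟨⟨s₀, hS hs₀⟩, fun h => h.1 hs₀⟩
  exact hgAcyclic_of_isJoinTree
    (collapseCompl.isJoinTree (isJoinTree_shrinkLabel hT hov) hatt shrinkLabel_of_notMem_keptEdges)
    collapseLabel_shrinkLabel_injective mem_sdiff_union_iff_exists_collapseLabel

/-- If `S = {e₁, ..., e_n}` (`n ≥ 2`) is a set of distinct ears of an acyclic
hypergraph `H` all having the same overlap `o`, then the hypergraph with
hyperedge set `(E(H) \ S) ∪ {o}` is acyclic. -/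
theorem stmt_7 (E : Finset (Finset A)) (hE : HGAcyclic E)
    (S : Finset (Finset A)) (hS : S ⊆ E) (hcard : 2 ≤ S.card)
    (o : Finset A) (hear : ∀ e ∈ S, IsEar E e) (hov : ∀ e ∈ S, overlap E e = o) :
    HGAcyclic ((E \ S) ∪ {o}) :=
  stmt_7_general E hE S hS hcard o hov
end

section
/- Let T_1 and T_2 be two join trees rooted at q_1 and q_2 respectively, with disjoint vertex sets, such that for all vertices q_1' of T_1 and q_2' of T_2, χ(q_1') ∩ χ(q_2') ⊆ χ(q_1) and χ(q_1') ∩ χ(q_2') ⊆ χ(q_2). Then the tree T' obtained by adding an edge between q_1 and q_2 (making q_2 a child of q_1) satisfies the connectedness condition. -/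
/-- The connectedness condition for a labeled tree. -/
def connCond {V A : Type*} (G : SimpleGraph V) (χ : V → Set A) : Prop :=
  ∀ (p q : V) (W : G.Walk p q), W.IsPath → ∀ s ∈ W.support, χ p ∩ χ q ⊆ χ s

/-!
A path in the glued graph either stays inside one of the two trees or crosses the bridge
`q₁ — q₂` exactly once (crossing twice would visit `q₁` twice), so its vertex list is a walk
of `T₁` ending at `q₁` followed by a walk of `T₂` starting at `q₂`, or the reverse. For a path
from `p ∈ T₁` to `q ∈ T₂`, the hypothesis puts `χ(p) ∩ χ(q)` inside both `χ(q₁)` and `χ(q₂)`,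
and the connectedness of `T₁` on the path `p ⋯ q₁` and of `T₂` on `q₂ ⋯ q` does the rest.
-/

open Sum

namespace SimpleGraph

variable {V₁ V₂ : Type*} (G₁ : SimpleGraph V₁) (G₂ : SimpleGraph V₂) (q₁ : V₁) (q₂ : V₂)

def bridgeSum : SimpleGraph (V₁ ⊕ V₂) :=
  fromRel (fun x y : V₁ ⊕ V₂ =>
    (∃ a b, x = inl a ∧ y = inl b ∧ G₁.Adj a b) ∨
    (∃ a b, x = inr a ∧ y = inr b ∧ G₂.Adj a b) ∨
    (x = inl q₁ ∧ y = inr q₂))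

variable {G₁ G₂ q₁ q₂}

@[simp]
lemma bridgeSum_adj_inl_inl {a b : V₁} :
    (bridgeSum G₁ G₂ q₁ q₂).Adj (inl a) (inl b) ↔ G₁.Adj a b := by
  simpa [bridgeSum, G₁.adj_comm b a] using G₁.ne_of_adj

@[simp]
lemma bridgeSum_adj_inr_inr {a b : V₂} :
    (bridgeSum G₁ G₂ q₁ q₂).Adj (inr a) (inr b) ↔ G₂.Adj a b := by
  simpa [bridgeSum, G₂.adj_comm b a] using G₂.ne_of_adj

@[simp]
lemma bridgeSum_adj_inl_inr {a : V₁} {b : V₂} :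
    (bridgeSum G₁ G₂ q₁ q₂).Adj (inl a) (inr b) ↔ a = q₁ ∧ b = q₂ := by
  simp [bridgeSum]

@[simp]
lemma bridgeSum_adj_inr_inl {a : V₂} {b : V₁} :
    (bridgeSum G₁ G₂ q₁ q₂).Adj (inr a) (inl b) ↔ a = q₂ ∧ b = q₁ := by
  simp [bridgeSum, and_comm]

variable (G₁ G₂ q₁ q₂) in
def IsBridgeSumSupport : V₁ ⊕ V₂ → V₁ ⊕ V₂ → List (V₁ ⊕ V₂) → Prop
  | inl a, inl b, L => ∃ P₁ : G₁.Walk a b, L = P₁.support.map inl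
  | inr a, inr b, L => ∃ P₂ : G₂.Walk a b, L = P₂.support.map inr
  | inl a, inr b, L => ∃ (P₁ : G₁.Walk a q₁) (P₂ : G₂.Walk q₂ b),
      L = P₁.support.map inl ++ P₂.support.map inr
  | inr a, inl b, L => ∃ (P₂ : G₂.Walk a q₂) (P₁ : G₁.Walk q₁ b),
      L = P₂.support.map inr ++ P₁.support.map inl

lemma Walk.isBridgeSumSupport_support {x y : V₁ ⊕ V₂}
    (W : (bridgeSum G₁ G₂ q₁ q₂).Walk x y) (hW : W.support.Nodup) :
    IsBridgeSumSupport G₁ G₂ q₁ q₂ x y W.support := by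
  induction W with
  | @nil x => rcases x with a | a <;> exact ⟨.nil, rfl⟩
  | @cons x u y h W ih =>
    rw [support_cons, List.nodup_cons] at hW
    have ih := ih hW.2
    rcases x with a | a <;> rcases u with c | c <;> rcases y with b | b <;>
      simp only [bridgeSum_adj_inl_inl, bridgeSum_adj_inr_inr, bridgeSum_adj_inl_inr,
        bridgeSum_adj_inr_inl] at h
    · obtain ⟨P₁, hP⟩ := ih
      exact ⟨.cons h P₁, by simp [hP]⟩
    · obtain ⟨P₁, P₂, hP⟩ := ih
      exact ⟨.cons h P₁, P₂, by simp [hP]⟩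
    · obtain ⟨rfl, rfl⟩ := h
      obtain ⟨P₂, P₁, hP⟩ := ih
      exact (hW.1 (by simp [hP, P₁.start_mem_support])).elim
    · obtain ⟨rfl, rfl⟩ := h
      obtain ⟨P₂, hP⟩ := ih
      exact ⟨.nil, P₂, by simp [hP]⟩
    · obtain ⟨rfl, rfl⟩ := h
      obtain ⟨P₁, hP⟩ := ih
      exact ⟨.nil, P₁, by simp [hP]⟩
    · obtain ⟨rfl, rfl⟩ := h
      obtain ⟨P₁, P₂, hP⟩ := ih
      exact (hW.1 (by simp [hP, P₂.start_mem_support])).elim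
    · obtain ⟨P₂, P₁, hP⟩ := ih
      exact ⟨.cons h P₂, P₁, by simp [hP]⟩
    · obtain ⟨P₂, hP⟩ := ih
      exact ⟨.cons h P₂, by simp [hP]⟩

theorem connCond_bridgeSum {A : Type*} {χ₁ : V₁ → Set A} {χ₂ : V₂ → Set A}
    (hc₁ : connCond G₁ χ₁) (hc₂ : connCond G₂ χ₂)
    (hcap : ∀ p₁ p₂, χ₁ p₁ ∩ χ₂ p₂ ⊆ χ₁ q₁ ∧ χ₁ p₁ ∩ χ₂ p₂ ⊆ χ₂ q₂) :
    connCond (bridgeSum G₁ G₂ q₁ q₂) (Sum.elim χ₁ χ₂) := by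
  intro p q W hW s hs
  have hnd := hW.support_nodup
  have hshape := W.isBridgeSumSupport_support hnd
  rcases p with a | a <;> rcases q with b | b
  · obtain ⟨P₁, hP⟩ := hshape
    rw [hP] at hs hnd
    obtain ⟨c, hc, rfl⟩ := List.mem_map.1 hs
    exact hc₁ a b P₁ (.mk' (hnd.of_map inl)) c hc
  · obtain ⟨P₁, P₂, hP⟩ := hshape
    rw [hP, List.nodup_append] at hnd
    rw [hP, List.mem_append, List.mem_map, List.mem_map] at hs
    rcases hs with ⟨c, hc, rfl⟩ | ⟨c, hc, rfl⟩
    · exact fun z hz ↦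
        hc₁ a q₁ P₁ (.mk' (hnd.1.of_map inl)) c hc ⟨hz.1, (hcap a b).1 hz⟩
    · exact fun z hz ↦
        hc₂ q₂ b P₂ (.mk' (hnd.2.1.of_map inr)) c hc ⟨(hcap a b).2 hz, hz.2⟩
  · obtain ⟨P₂, P₁, hP⟩ := hshape
    rw [hP, List.nodup_append] at hnd
    rw [hP, List.mem_append, List.mem_map, List.mem_map] at hs
    rcases hs with ⟨c, hc, rfl⟩ | ⟨c, hc, rfl⟩
    · exact fun z hz ↦
        hc₂ a q₂ P₂ (.mk' (hnd.1.of_map inr)) c hc ⟨hz.1, (hcap b a).2 ⟨hz.2, hz.1⟩⟩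
    · exact fun z hz ↦
        hc₁ q₁ b P₁ (.mk' (hnd.2.1.of_map inl)) c hc ⟨(hcap b a).1 ⟨hz.2, hz.1⟩, hz.2⟩
  · obtain ⟨P₂, hP⟩ := hshape
    rw [hP] at hs hnd
    obtain ⟨c, hc, rfl⟩ := List.mem_map.1 hs
    exact hc₂ a b P₂ (.mk' (hnd.of_map inr)) c hc

end SimpleGraph

theorem stmt_14_general {V₁ V₂ A : Type*} (G₁ : SimpleGraph V₁) (G₂ : SimpleGraph V₂)
    (q₁ : V₁) (q₂ : V₂)
    (χ₁ : V₁ → Set A) (χ₂ : V₂ → Set A)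
    (hc₁ : connCond G₁ χ₁) (hc₂ : connCond G₂ χ₂)
    (hcap : ∀ (p₁ : V₁) (p₂ : V₂),
      χ₁ p₁ ∩ χ₂ p₂ ⊆ χ₁ q₁ ∧ χ₁ p₁ ∩ χ₂ p₂ ⊆ χ₂ q₂) :
    connCond
      (SimpleGraph.fromRel (fun x y : V₁ ⊕ V₂ =>
        (∃ a b, x = Sum.inl a ∧ y = Sum.inl b ∧ G₁.Adj a b) ∨
        (∃ a b, x = Sum.inr a ∧ y = Sum.inr b ∧ G₂.Adj a b) ∨
        (x = Sum.inl q₁ ∧ y = Sum.inr q₂)))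
      (Sum.elim χ₁ χ₂) :=
  SimpleGraph.connCond_bridgeSum hc₁ hc₂ hcap

/-- Let `T₁` and `T₂` be two join trees rooted at `q₁` and `q₂` respectively,
with disjoint vertex sets (realized as a sum type), each satisfying the
connectedness condition, and such that for all vertices `q₁'` of `T₁` and
`q₂'` of `T₂`, `χ(q₁') ∩ χ(q₂') ⊆ χ(q₁)` and `χ(q₁') ∩ χ(q₂') ⊆ χ(q₂)`.
Then the tree obtained by adding an edge between `q₁` and `q₂` satisfies the
connectedness condition. -/
theorem stmt_14 {V₁ V₂ A : Type*} (G₁ : SimpleGraph V₁) (G₂ : SimpleGraph V₂)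
    (h₁ : G₁.IsTree) (h₂ : G₂.IsTree) (q₁ : V₁) (q₂ : V₂)
    (χ₁ : V₁ → Set A) (χ₂ : V₂ → Set A)
    (hc₁ : connCond G₁ χ₁) (hc₂ : connCond G₂ χ₂)
    (hcap : ∀ (p₁ : V₁) (p₂ : V₂),
      χ₁ p₁ ∩ χ₂ p₂ ⊆ χ₁ q₁ ∧ χ₁ p₁ ∩ χ₂ p₂ ⊆ χ₂ q₂) :
    connCond
      (SimpleGraph.fromRel (fun x y : V₁ ⊕ V₂ =>
        (∃ a b, x = Sum.inl a ∧ y = Sum.inl b ∧ G₁.Adj a b) ∨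
        (∃ a b, x = Sum.inr a ∧ y = Sum.inr b ∧ G₂.Adj a b) ∨
        (x = Sum.inl q₁ ∧ y = Sum.inr q₂)))
      (Sum.elim χ₁ χ₂) :=
  stmt_14_general G₁ G₂ q₁ q₂ χ₁ χ₂ hc₁ hc₂ hcap
end

section
/- Every Prüfer sequence of length n−2 over the alphabet {1,...,n} decodes to a unique labeled tree on n vertices, and distinct sequences decode to distinct trees; hence there are exactly n^(n−2) labeled trees on n vertices (Cayley's formula). -/
/-!
Joyal's proof. A tree rooted at `r` is the same thing as a parent map `h : V → V`: `h r = r`, and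
every vertex reaches `r` by iterating `h`. A *vertebrate* is such a tree with a second marked
vertex, its tail; the path from the tail to the root (the head) is its spine.

An arbitrary map `f : V → V` splits into the permutation it induces on its set `P` of periodic
points and the forest rooted at `P` formed by its remaining arrows. A vertebrate with spine `P`
splits in the same way into the enumeration `Fin #P ≃ P` of `P` along the spine and the forest
rooted at `P` hanging off the spine. Since `P` has as many enumerations as permutations, this
gives a bijection between maps `V → V` and vertebrates, whence `n ^ n = n ^ 2 · #trees`.
-/

open Function

namespace Cayley

section Iterate

variable {α : Type*} {f g : α → α} {x : α}

theorem exists_iterate_mem_of_eq_off {s : Set α} (hfg : ∀ y ∉ s, f y = g y) {n : ℕ}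
    (hn : f^[n] x ∈ s) : ∃ k, g^[k] x ∈ s := by
  induction n generalizing x with
  | zero => exact ⟨0, hn⟩
  | succ n ih =>
    by_cases hx : x ∈ s
    · exact ⟨0, hx⟩
    · obtain ⟨k, hk⟩ := ih (x := f x) hn
      exact ⟨k + 1, by rwa [iterate_succ_apply, ← hfg x hx]⟩

theorem exists_iterate_mem_periodicPts [Finite α] (f : α → α) (x : α) :
    ∃ n, f^[n] x ∈ periodicPts f := by
  obtain ⟨i, j, hij, heq⟩ := Finite.exists_ne_map_eq_of_infinite (f^[·] x)
  wlog hlt : i < j generalizing i j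
  · exact this j i hij.symm heq.symm (by omega)
  refine ⟨i, mk_mem_periodicPts (n := j - i) (by omega) ?_⟩
  change f^[j - i] (f^[i] x) = f^[i] x
  rw [← iterate_add_apply, Nat.sub_add_cancel hlt.le]
  exact heq.symm

theorem mem_of_mem_periodicPts_of_iterate_mem {s : Set α} (hs : Set.MapsTo f s s)
    (hx : x ∈ periodicPts f) {n : ℕ} (hn : f^[n] x ∈ s) : x ∈ s := by
  obtain ⟨p, hp, hpx⟩ := hx
  have hle : n ≤ p * n := Nat.le_mul_of_pos_left n hp
  rw [← (hpx.mul_const n).eq, ← Nat.sub_add_cancel hle, iterate_add_apply]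
  exact hs.iterate _ hn

theorem exists_iterate_eq_of_measure_lt {r : α} (μ : α → ℕ) (hμ : ∀ y ≠ r, μ (f y) < μ y)
    (x : α) : ∃ k, f^[k] x = r := by
  induction hx : μ x using Nat.strong_induction_on generalizing x with
  | _ n ih =>
    by_cases hxr : x = r
    · exact ⟨0, hxr⟩
    · obtain ⟨k, hk⟩ := ih _ (hx ▸ hμ x hxr) (f x) rfl
      exact ⟨k + 1, hk⟩

open scoped Classical in
noncomputable def orbitFinset [Fintype α] (g : α → α) (a : α) : Finset α :=
  {v | ∃ k, g^[k] a = v}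

variable [Fintype α] {a v : α}

theorem mem_orbitFinset : v ∈ orbitFinset g a ↔ ∃ k, g^[k] a = v := by
  simp [orbitFinset]

theorem iterate_mem_orbitFinset (k : ℕ) : g^[k] a ∈ orbitFinset g a :=
  mem_orbitFinset.2 ⟨k, rfl⟩

theorem card_orbitFinset_le {i j : ℕ} (hij : i < j) (heq : g^[i] a = g^[j] a) :
    (orbitFinset g a).card ≤ j := by
  classical
  have hsub : orbitFinset g a ⊆ (Finset.range j).image (g^[·] a) := by
    intro v hv
    obtain ⟨t, rfl⟩ := mem_orbitFinset.1 hv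
    induction t using Nat.strong_induction_on with
    | _ t ih =>
      by_cases ht : t < j
      · exact Finset.mem_image.2 ⟨t, Finset.mem_range.2 ht, rfl⟩
      · have hshift : g^[t] a = g^[t - (j - i)] a := by
          rw [show t = (t - j) + j by omega, iterate_add_apply, ← heq, ← iterate_add_apply]
          congr 1
          omega
        rw [hshift]
        exact ih _ (by omega) (iterate_mem_orbitFinset _)
  simpa using Finset.card_le_card hsub |>.trans Finset.card_image_le

theorem iterate_injOn_lt_card {i j : ℕ} (hi : i < (orbitFinset g a).card)
    (hj : j < (orbitFinset g a).card) (heq : g^[i] a = g^[j] a) : i = j := by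
  by_contra hne
  rcases Nat.lt_or_gt_of_ne hne with h | h
  · exact absurd (card_orbitFinset_le h heq) (by omega)
  · exact absurd (card_orbitFinset_le h heq.symm) (by omega)

theorem exists_lt_card_iterate_eq (hv : v ∈ orbitFinset g a) :
    ∃ i < (orbitFinset g a).card, g^[i] a = v := by
  classical
  have heq : (Finset.range (orbitFinset g a).card).image (g^[·] a) = orbitFinset g a := by
    refine Finset.eq_of_subset_of_card_le (fun w hw => ?_) ?_
    · obtain ⟨i, -, rfl⟩ := Finset.mem_image.1 hw
      exact iterate_mem_orbitFinset i
    · rw [Finset.card_image_of_injOn, Finset.card_range]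
      intro i hi j hj h
      exact iterate_injOn_lt_card (Finset.mem_range.1 hi) (Finset.mem_range.1 hj) h
  rw [← heq] at hv
  simpa using hv

theorem iterate_card_orbitFinset_sub_one {b : α} (hb : g b = b) (hmem : b ∈ orbitFinset g a) :
    g^[(orbitFinset g a).card - 1] a = b := by
  obtain ⟨i, hi, rfl⟩ := exists_lt_card_iterate_eq hmem
  rw [← Nat.sub_add_cancel (Nat.le_sub_one_of_lt hi), iterate_add_apply, iterate_fixed hb]

noncomputable def iterateEquiv {P : Finset α} (hP : orbitFinset g a = P) : Fin P.card ≃ P :=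
  Equiv.ofBijective (fun i => ⟨g^[i] a, hP ▸ iterate_mem_orbitFinset i⟩) <| by
    subst hP
    refine (Fintype.bijective_iff_injective_and_card _).2 ⟨fun i j hij => Fin.ext ?_, by simp⟩
    exact iterate_injOn_lt_card i.2 j.2 (congrArg Subtype.val hij)

end Iterate

section ParentMap

variable {V : Type*}

/-- `h` is the parent function of a rooted forest whose set of roots is `P`. -/
def IsParentMap (P : Finset V) (h : V → V) : Prop :=
  (∀ v ∈ P, h v = v) ∧ ∀ v, ∃ k, h^[k] v ∈ P

theorem isParentMap_singleton {r : V} {h : V → V} :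
    IsParentMap {r} h ↔ h r = r ∧ ∀ v, ∃ k, h^[k] v = r := by
  simp [IsParentMap]

def parentGraph (h : V → V) : SimpleGraph V :=
  SimpleGraph.fromRel fun u v => h u = v

variable {h h' : V → V} {r u v : V}

theorem parentGraph_adj : (parentGraph h).Adj u v ↔ u ≠ v ∧ (h u = v ∨ h v = u) :=
  SimpleGraph.fromRel_adj _ u v

theorem reachable_apply (h : V → V) (v : V) : (parentGraph h).Reachable v (h v) := by
  by_cases hv : v = h v
  · rw [← hv]
  · exact (parentGraph_adj.2 ⟨hv, Or.inl rfl⟩).reachable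

theorem dist_apply_le (h : V → V) (v : V) : (parentGraph h).dist v (h v) ≤ 1 := by
  by_cases hv : v = h v
  · simp [← hv]
  · exact (SimpleGraph.dist_eq_one_iff_adj.2 (parentGraph_adj.2 ⟨hv, Or.inl rfl⟩)).le

theorem reachable_iterate (h : V → V) (v : V) (k : ℕ) :
    (parentGraph h).Reachable v (h^[k] v) := by
  induction k with
  | zero => rfl
  | succ k ih => exact iterate_succ_apply' h k v ▸ ih.trans (reachable_apply h _)

theorem dist_iterate_le (h : V → V) (v : V) (k : ℕ) :
    (parentGraph h).dist v (h^[k] v) ≤ k := by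
  induction k with
  | zero => simp
  | succ k ih =>
    have := (reachable_apply h (h^[k] v)).dist_triangle_right v
    rw [iterate_succ_apply']
    linarith [dist_apply_le h (h^[k] v)]

theorem iterate_length_eq (hr : h r = r) (p : (parentGraph h).Walk v r) : h^[p.length] v = r := by
  induction p with
  | nil => rfl
  | @cons x y _ hadj q ih =>
    specialize ih hr
    rw [SimpleGraph.Walk.length_cons, iterate_succ_apply]
    rcases (parentGraph_adj.1 hadj).2 with hxy | hyx
    · rw [hxy, ih]
    · rw [← hyx, ← iterate_succ_apply, ← iterate_succ_apply, iterate_succ_apply',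
        iterate_succ_apply', ih, hr, hr]

theorem IsParentMap.connected (hh : IsParentMap {r} h) : (parentGraph h).Connected := by
  rw [isParentMap_singleton] at hh
  have hreach (v : V) : (parentGraph h).Reachable v r := by
    obtain ⟨k, hk⟩ := hh.2 v
    exact hk ▸ reachable_iterate h v k
  exact (SimpleGraph.connected_iff _).2 ⟨fun u v => (hreach u).trans (hreach v).symm, ⟨r⟩⟩

theorem IsParentMap.dist_apply_lt (hh : IsParentMap {r} h) (hv : v ≠ r) :
    (parentGraph h).dist (h v) r < (parentGraph h).dist v r := by
  have hpos := hh.connected.pos_dist_of_ne hv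
  obtain ⟨p, hp⟩ := hh.connected.exists_walk_length_eq_dist v r
  have hr : h^[(parentGraph h).dist v r - 1] (h v) = r := by
    rw [← iterate_succ_apply, Nat.succ_eq_add_one, Nat.sub_add_cancel hpos, ← hp]
    exact iterate_length_eq (isParentMap_singleton.1 hh).1 p
  have := dist_iterate_le h (h v) ((parentGraph h).dist v r - 1)
  rw [hr] at this
  omega

theorem IsParentMap.apply_ne (hh : IsParentMap {r} h) (hv : v ≠ r) : h v ≠ v := by
  intro hfix
  have := hh.dist_apply_lt hv
  rw [hfix] at this
  exact lt_irrefl _ this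

theorem IsParentMap.bijective_parentEdge (hh : IsParentMap {r} h) :
    Bijective fun v : {v // v ≠ r} =>
      (⟨s(v.1, h v.1), parentGraph_adj.2 ⟨(hh.apply_ne v.2).symm, Or.inl rfl⟩⟩ :
        (parentGraph h).edgeSet) := by
  have hr := (isParentMap_singleton.1 hh).1
  constructor
  · rintro ⟨u, hu⟩ ⟨v, hv⟩ huv
    rcases Sym2.eq_iff.1 (Subtype.ext_iff.1 huv) with ⟨huv, -⟩ | ⟨rfl, hvu⟩
    · exact Subtype.ext huv
    · have h₁ := hh.dist_apply_lt hu
      have h₂ := hh.dist_apply_lt hv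
      rw [hvu] at h₁
      exact absurd (h₁.trans h₂) (lt_irrefl _)
  · rintro ⟨e, he⟩
    induction e using Sym2.ind with
    | _ x y =>
      obtain ⟨hxy, hx | hy⟩ := parentGraph_adj.1 ((SimpleGraph.mem_edgeSet _).1 he)
      · refine ⟨⟨x, fun hxr => hxy ?_⟩, Subtype.ext (show s(x, h x) = s(x, y) by rw [hx])⟩
        rw [← hx, hxr, hr]
      · refine ⟨⟨y, fun hyr => hxy ?_⟩,
          Subtype.ext (show s(y, h y) = s(x, y) by rw [hy, Sym2.eq_swap])⟩
        rw [← hy, hyr, hr]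

theorem IsParentMap.card_edgeSet [Finite V] (hh : IsParentMap {r} h) :
    Nat.card (parentGraph h).edgeSet + 1 = Nat.card V := by
  classical
  have := Fintype.ofFinite V
  rw [← Nat.card_congr (Equiv.ofBijective _ hh.bijective_parentEdge), Nat.card_eq_fintype_card,
    Nat.card_eq_fintype_card, Fintype.card_subtype_compl, Fintype.card_subtype_eq]
  have := Fintype.card_pos_iff.2 ⟨r⟩
  omega

theorem IsParentMap.isTree [Finite V] (hh : IsParentMap {r} h) : (parentGraph h).IsTree :=
  SimpleGraph.isTree_iff_connected_and_card.2 ⟨hh.connected, hh.card_edgeSet⟩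

theorem IsParentMap.eq_of_parentGraph_eq (hh : IsParentMap {r} h) (hh' : IsParentMap {r} h')
    (heq : parentGraph h = parentGraph h') : h = h' := by
  have hr := (isParentMap_singleton.1 hh).1
  have hr' := (isParentMap_singleton.1 hh').1
  funext v
  by_cases hv : v = r
  · rw [hv, hr, hr']
  have hadj : (parentGraph h').Adj v (h v) :=
    heq ▸ parentGraph_adj.2 ⟨(hh.apply_ne hv).symm, Or.inl rfl⟩
  rcases (parentGraph_adj.1 hadj).2 with hvh | hhv
  · exact hvh.symm
  -- otherwise `v` and `h v` would each be strictly closer to `r` than the other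
  · have hhvr : h v ≠ r := fun hhvr => hv (by rw [← hhv, hhvr, hr'])
    have d₁ := hh.dist_apply_lt hv
    have d₂ := hh'.dist_apply_lt hhvr
    rw [hhv, ← heq] at d₂
    exact absurd (d₁.trans d₂) (lt_irrefl _)

theorem _root_.SimpleGraph.Connected.exists_adj_dist_lt {G : SimpleGraph V} (hG : G.Connected)
    (hv : v ≠ r) : ∃ w, G.Adj v w ∧ G.dist w r < G.dist v r := by
  obtain ⟨p, hp⟩ := hG.exists_walk_length_eq_dist v r
  cases p with
  | nil => exact absurd rfl hv
  | cons hadj q =>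
    rw [SimpleGraph.Walk.length_cons] at hp
    exact ⟨_, hadj, (SimpleGraph.dist_le q).trans_lt (by omega)⟩

theorem parentGraph_le {G : SimpleGraph V} (hG : ∀ v, h v ≠ v → G.Adj v (h v)) :
    parentGraph h ≤ G := by
  intro u v huv
  obtain ⟨hne, rfl | rfl⟩ := parentGraph_adj.1 huv
  · exact hG u (Ne.symm hne)
  · exact (hG v hne).symm

theorem exists_isParentMap_parentGraph_eq [Finite V] {G : SimpleGraph V} (hG : G.IsTree)
    (r : V) : ∃ h, IsParentMap {r} h ∧ parentGraph h = G := by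
  classical
  choose! step hadj hlt using fun v (hv : v ≠ r) => hG.connected.exists_adj_dist_lt hv
  let h v := if v = r then r else step v
  have hstep {v} (hv : v ≠ r) : h v = step v := if_neg hv
  have hh : IsParentMap {r} h := by
    refine isParentMap_singleton.2 ⟨if_pos rfl, exists_iterate_eq_of_measure_lt (G.dist · r)
      fun v hv => ?_⟩
    simpa [hstep hv] using hlt v hv
  have hle : parentGraph h ≤ G := by
    refine parentGraph_le fun v hv => ?_
    have hvr : v ≠ r := fun hvr => hv (by simp [h, hvr])
    exact hstep hvr ▸ hadj v hvr
  -- a tree contained in the tree `G` is all of `G`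
  exact ⟨h, hh, le_antisymm hle
    ((SimpleGraph.isTree_iff_maximal_isAcyclic.1 hh.isTree).2.2 hG.isAcyclic hle)⟩

noncomputable def parentMapEquivTree [Finite V] (r : V) :
    {h : V → V // IsParentMap {r} h} ≃ {G : SimpleGraph V // G.IsTree} :=
  Equiv.ofBijective (fun h => ⟨parentGraph h.1, h.2.isTree⟩)
    ⟨fun h h' heq => Subtype.ext (h.2.eq_of_parentGraph_eq h'.2 (congrArg Subtype.val heq)),
      fun G => (exists_isParentMap_parentGraph_eq G.2 r).elim
        fun h hh => ⟨⟨h, hh.1⟩, Subtype.ext hh.2⟩⟩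

end ParentMap

section Joyal

variable {V : Type*} {P : Finset V}

open scoped Classical in
noncomputable def prune (P : Finset V) (f : V → V) : V → V :=
  fun v => if v ∈ P then v else f v

theorem prune_of_mem {f : V → V} {v : V} (hv : v ∈ P) : prune P f v = v := if_pos hv

theorem prune_of_notMem {f : V → V} {v : V} (hv : v ∉ P) : prune P f v = f v := if_neg hv

theorem isParentMap_prune {f : V → V} (hf : ∀ v, ∃ n, f^[n] v ∈ P) :
    IsParentMap P (prune P f) := by
  refine ⟨fun v hv => prune_of_mem hv, fun v => ?_⟩
  obtain ⟨n, hn⟩ := hf v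
  exact exists_iterate_mem_of_eq_off (s := (P : Set V)) (fun y hy => (prune_of_notMem hy).symm) hn

open scoped Classical in
noncomputable def glue (P : Finset V) (σ : Equiv.Perm P) (h : V → V) : V → V :=
  fun v => if hv : v ∈ P then σ ⟨v, hv⟩ else h v

theorem glue_coe (σ : Equiv.Perm P) (h : V → V) (x : P) : glue P σ h x = σ x :=
  dif_pos x.2

theorem glue_of_notMem (σ : Equiv.Perm P) (h : V → V) {v : V} (hv : v ∉ P) :
    glue P σ h v = h v :=
  dif_neg hv

theorem periodicPts_glue (σ : Equiv.Perm P) {h : V → V} (hh : IsParentMap P h) :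
    periodicPts (glue P σ h) = P := by
  ext v
  constructor
  · intro hv
    by_contra hvP
    obtain ⟨k, hk⟩ := hh.2 v
    obtain ⟨n, hn⟩ := exists_iterate_mem_of_eq_off (s := (P : Set V)) (f := h)
      (g := glue P σ h) (fun y hy => (glue_of_notMem σ h hy).symm) (Finset.mem_coe.2 hk)
    have hmaps : Set.MapsTo (glue P σ h) P P := fun x hx => glue_coe σ h ⟨x, hx⟩ ▸ (σ ⟨x, hx⟩).2
    exact hvP (mem_of_mem_periodicPts_of_iterate_mem hmaps hv hn)
  · intro hv
    have hsemi : Semiconj ((↑) : P → V) σ (glue P σ h) := fun x => (glue_coe σ h x).symm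
    exact hsemi.mapsTo_periodicPts (σ.injective.mem_periodicPts ⟨v, hv⟩)

open scoped Classical in
/-- The spine `e 0 → e 1 → ⋯ → e (#P - 1)`, rooted at its last vertex, with the forest `h`
hanging off it. -/
noncomputable def graft (e : Fin P.card ≃ P) (h : V → V) : V → V := fun v =>
  if hv : v ∈ P then
    e ⟨min (e.symm ⟨v, hv⟩ + 1) (P.card - 1), by have := (e.symm ⟨v, hv⟩).isLt; omega⟩
  else h v

theorem graft_of_notMem (e : Fin P.card ≃ P) (h : V → V) {v : V} (hv : v ∉ P) :
    graft e h v = h v :=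
  dif_neg hv

theorem graft_coe (e : Fin P.card ≃ P) (h : V → V) (i : Fin P.card) :
    graft e h (e i) = e ⟨min (i + 1) (P.card - 1), by omega⟩ := by
  simp [graft]

theorem graft_iterate (e : Fin P.card ≃ P) (h : V → V) (i : Fin P.card) (j : ℕ) :
    (graft e h)^[j] (e i) = e ⟨min (i + j) (P.card - 1), by omega⟩ := by
  induction j with
  | zero => simp [min_eq_left (Nat.le_sub_one_of_lt i.isLt)]
  | succ j ih =>
    rw [iterate_succ_apply', ih, graft_coe]
    congr 3
    simp only
    omega

theorem IsParentMap.card_pos [Nonempty V] {h : V → V} (hh : IsParentMap P h) : 0 < P.card :=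
  Finset.card_pos.2 ⟨_, (hh.2 (Classical.arbitrary V)).choose_spec⟩

/-- A tree with two marked vertices, `head` being the root of `parent`. -/
@[ext]
structure Vertebrate (V : Type*) where
  tail : V
  head : V
  parent : V → V
  isParentMap : IsParentMap {head} parent

namespace Vertebrate

noncomputable def ofSpine [Nonempty V] (e : Fin P.card ≃ P) {h : V → V} (hh : IsParentMap P h) :
    Vertebrate V where
  tail := e ⟨0, hh.card_pos⟩
  head := e ⟨P.card - 1, by have := hh.card_pos; omega⟩
  parent := graft e h
  isParentMap := by
    have hpos := hh.card_pos
    have hlast (i : Fin P.card) :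
        (graft e h)^[P.card - 1] (e i) = e ⟨P.card - 1, by omega⟩ := by
      rw [graft_iterate]
      congr 3
      omega
    refine isParentMap_singleton.2 ⟨?_, fun v => ?_⟩
    · rw [graft_coe]
      congr 3
      simp
    · obtain ⟨k, hk⟩ := hh.2 v
      obtain ⟨n, hn⟩ := exists_iterate_mem_of_eq_off (s := (P : Set V)) (g := graft e h)
        (fun y hy => (graft_of_notMem e h hy).symm) hk
      refine ⟨P.card - 1 + n, ?_⟩
      rw [iterate_add_apply, show (graft e h)^[n] v = e (e.symm ⟨_, hn⟩) by simp, hlast]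

end Vertebrate

variable [Fintype V]

open scoped Classical in
noncomputable def periodicFinset (f : V → V) : Finset V :=
  {v | v ∈ periodicPts f}

@[simp]
theorem coe_periodicFinset (f : V → V) : (periodicFinset f : Set V) = periodicPts f := by
  ext; simp [periodicFinset]

noncomputable def periodicFiberEquiv (P : Finset V) :
    {f : V → V // periodicFinset f = P} ≃ Equiv.Perm P × {h : V → V // IsParentMap P h} where
  toFun f :=
    have hP : periodicPts f.1 = P := by rw [← coe_periodicFinset, f.2]
    ((hP ▸ bijOn_periodicPts f.1).equiv _, ⟨prune P f.1, isParentMap_prune fun v => by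
        obtain ⟨n, hn⟩ := exists_iterate_mem_periodicPts f.1 v
        exact ⟨n, show f.1^[n] v ∈ (P : Set V) from hP ▸ hn⟩⟩)
  invFun p := ⟨glue P p.1 p.2.1, by
    rw [← Finset.coe_inj, coe_periodicFinset, periodicPts_glue _ p.2.2]⟩
  left_inv f := by
    refine Subtype.ext (funext fun v => ?_)
    by_cases hv : v ∈ P
    · exact glue_coe _ _ ⟨v, hv⟩
    · exact (glue_of_notMem _ _ hv).trans (prune_of_notMem hv)
  right_inv p := by
    refine Prod.ext (Equiv.ext fun x => Subtype.ext (glue_coe _ _ x))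
      (Subtype.ext (funext fun v => ?_))
    by_cases hv : v ∈ P
    · exact (prune_of_mem hv).trans (p.2.2.1 v hv).symm
    · exact (prune_of_notMem hv).trans (glue_of_notMem _ _ hv)

namespace Vertebrate

/-- The path from the tail to the head. -/
noncomputable def spine (x : Vertebrate V) : Finset V :=
  orbitFinset x.parent x.tail

theorem head_mem_spine (x : Vertebrate V) : x.head ∈ x.spine :=
  mem_orbitFinset.2 ((isParentMap_singleton.1 x.isParentMap).2 x.tail)

theorem spine_ofSpine [Nonempty V] (e : Fin P.card ≃ P) {h : V → V} (hh : IsParentMap P h) :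
    (ofSpine e hh).spine = P := by
  ext v
  simp only [spine, mem_orbitFinset, ofSpine, graft_iterate]
  constructor
  · rintro ⟨k, rfl⟩
    exact Subtype.coe_prop _
  · intro hv
    refine ⟨e.symm ⟨v, hv⟩, ?_⟩
    simp [min_eq_left (Nat.le_sub_one_of_lt (e.symm ⟨v, hv⟩).isLt)]

noncomputable def spineFiberEquiv [Nonempty V] (P : Finset V) :
    {x : Vertebrate V // x.spine = P} ≃
      (Fin P.card ≃ P) × {h : V → V // IsParentMap P h} where
  toFun x := (iterateEquiv x.2, ⟨prune P x.1.parent, isParentMap_prune fun v => by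
    obtain ⟨k, hk⟩ := (isParentMap_singleton.1 x.1.isParentMap).2 v
    have := x.1.head_mem_spine
    rw [x.2, ← hk] at this
    exact ⟨k, this⟩⟩)
  invFun p := ⟨ofSpine p.1 p.2.2, spine_ofSpine _ _⟩
  left_inv := by
    rintro ⟨x, rfl⟩
    have hroot := (isParentMap_singleton.1 x.isParentMap).1
    have hhead : x.parent^[x.spine.card - 1] x.tail = x.head :=
      iterate_card_orbitFinset_sub_one hroot x.head_mem_spine
    refine Subtype.ext (Vertebrate.ext rfl hhead (funext fun v => ?_))
    by_cases hv : v ∈ x.spine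
    · obtain ⟨i, hi, rfl⟩ := exists_lt_card_iterate_eq hv
      let e := iterateEquiv (g := x.parent) (a := x.tail) (P := x.spine) rfl
      change graft e (prune x.spine x.parent) (e ⟨i, hi⟩ : V) = x.parent (x.parent^[i] x.tail)
      rw [graft_coe]
      change x.parent^[min (i + 1) (x.spine.card - 1)] x.tail = _
      rcases le_or_gt (i + 1) (x.spine.card - 1) with hle | hgt
      · rw [min_eq_left hle, iterate_succ_apply']
      · obtain rfl : i = x.spine.card - 1 := by change i < x.spine.card at hi; omega
        rw [min_eq_right hgt.le, hhead, hroot]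
    · exact (graft_of_notMem _ _ hv).trans (prune_of_notMem hv)
  right_inv := by
    rintro ⟨e, h, hh⟩
    refine Prod.ext (Equiv.ext fun i => Subtype.ext ?_) (Subtype.ext (funext fun v => ?_))
    · change (graft e h)^[i] (e ⟨0, _⟩) = e i
      rw [graft_iterate]
      simp [min_eq_left (Nat.le_sub_one_of_lt i.isLt)]
    · by_cases hv : v ∈ P
      · exact (prune_of_mem hv).trans (hh.1 v hv).symm
      · exact (prune_of_notMem hv).trans (graft_of_notMem e h hv)

end Vertebrate

noncomputable def joyalEquiv [Nonempty V] : (V → V) ≃ Vertebrate V :=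
  (Equiv.sigmaFiberEquiv periodicFinset).symm.trans <|
    (Equiv.sigmaCongrRight fun P => (periodicFiberEquiv P).trans <|
      ((P.equivFin.equivCongr (Equiv.refl P)).prodCongr (Equiv.refl _)).trans
        (Vertebrate.spineFiberEquiv P).symm).trans (Equiv.sigmaFiberEquiv Vertebrate.spine)

noncomputable def vertebrateEquiv : Vertebrate V ≃ V × V × {G : SimpleGraph V // G.IsTree} where
  toFun x := (x.head, x.tail, parentMapEquivTree x.head ⟨x.parent, x.isParentMap⟩)
  invFun y := ⟨y.2.1, y.1, ((parentMapEquivTree y.1).symm y.2.2).1,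
    ((parentMapEquivTree y.1).symm y.2.2).2⟩
  left_inv x := by simp
  right_inv y := by simp

theorem card_isTree [Nonempty V] :
    Nat.card {G : SimpleGraph V // G.IsTree} = Fintype.card V ^ (Fintype.card V - 2) := by
  have hcard := Nat.card_congr (joyalEquiv.trans (vertebrateEquiv (V := V)))
  rw [Nat.card_fun, Nat.card_prod, Nat.card_prod, Nat.card_eq_fintype_card] at hcard
  set n := Fintype.card V
  have hn : 0 < n := Fintype.card_pos
  have hpow : n ^ n = n * (n * n ^ (n - 2)) := by
    rcases Nat.lt_or_ge n 2 with h1 | h2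
    · rw [show n = 1 by omega]
      rfl
    · rw [← mul_assoc, ← sq, ← pow_add, Nat.add_sub_cancel' h2]
  exact Nat.eq_of_mul_eq_mul_left hn (Nat.eq_of_mul_eq_mul_left hn (hcard.symm.trans hpow))

end Joyal

end Cayley

/-- Every Prüfer sequence of length `n - 2` over the alphabet `{1, ..., n}`
decodes to a unique labeled tree on `n` vertices, distinct sequences decode to
distinct trees, and every labeled tree arises this way; hence there are exactly
`n ^ (n - 2)` labeled trees on `n` vertices (Cayley's formula). -/
theorem stmt_19 (n : ℕ) (hn : 2 ≤ n) :
    ∃ decode : (Fin (n - 2) → Fin n) → {G : SimpleGraph (Fin n) // G.IsTree},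
      Function.Bijective decode ∧
        Nat.card {G : SimpleGraph (Fin n) // G.IsTree} = n ^ (n - 2) := by
  have : Nonempty (Fin n) := ⟨⟨0, by omega⟩⟩
  have hcard : Nat.card {G : SimpleGraph (Fin n) // G.IsTree} = n ^ (n - 2) := by
    simpa using Cayley.card_isTree (V := Fin n)
  obtain ⟨e⟩ : Nonempty ((Fin (n - 2) → Fin n) ≃ {G : SimpleGraph (Fin n) // G.IsTree}) :=
    Finite.card_eq.1 (by rw [hcard, Nat.card_fun]; simp)
  exact ⟨e, e.bijective, hcard⟩
end
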